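/- arXiv:1605.00419 — 8 statements merged into one kernel-verified Lean document; each statement's English description precedes it below -/
import Mathlib

section
/- For every full-rank lattice Λ in ℝ^n with n ≤ 2, if Λ is well-rounded (its minimal vectors span ℝ^n), then the minimal vectors of Λ generate Λ as a ℤ-module. -/
noncomputable section

open scoped BigOperators

/-- Squared Euclidean norm on `ℝⁿ`. -/
def sqnorm {n : ℕ} (x : Fin n → ℝ) : ℝ := ∑ i, (x i) ^ 2

/-- The minimum distance `λ₁` of a lattice: the infimum of squared norms of nonzero vectors. -/
def lambda1 {n : ℕ} (L : Submodule ℤ (Fin n → ℝ)) : ℝ :=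
  sInf {r : ℝ | ∃ x ∈ L, x ≠ 0 ∧ sqnorm x = r}

/-- A minimal vector of the lattice `L`. -/
def IsMinVec {n : ℕ} (L : Submodule ℤ (Fin n → ℝ)) (x : Fin n → ℝ) : Prop :=
  x ∈ L ∧ x ≠ 0 ∧ sqnorm x = lambda1 L

/-- A lattice is well-rounded if it has `n` linearly independent minimal vectors. -/
def IsWellRounded {n : ℕ} (L : Submodule ℤ (Fin n → ℝ)) : Prop :=
  ∃ v : Fin n → Fin n → ℝ, (∀ i, IsMinVec L (v i)) ∧ LinearIndependent ℝ v

/-- `L` is a full-rank lattice in `ℝⁿ`. -/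
def IsFullLattice {n : ℕ} (L : Submodule ℤ (Fin n → ℝ)) : Prop :=
  ∃ b : Fin n → Fin n → ℝ, LinearIndependent ℝ b ∧ L = Submodule.span ℤ (Set.range b)

/-- Covolume of the lattice spanned by the basis `b`. -/
def covolOf {n : ℕ} (b : Fin n → Fin n → ℝ) : ℝ := |Matrix.det (Matrix.of b)|

/-- The Hermite constant in dimension `n`. -/
def hermiteConstant (n : ℕ) : ℝ :=
  sSup {c : ℝ | ∃ (L : Submodule ℤ (Fin n → ℝ)) (b : Fin n → Fin n → ℝ),
    LinearIndependent ℝ b ∧ L = Submodule.span ℤ (Set.range b) ∧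
    c = lambda1 L / (covolOf b) ^ ((2 : ℝ) / n)}

/-- Canonical embedding of `a + b √D` into `ℝ²` for the real quadratic field `ℚ(√D)`. -/
def embQ (D a b : ℝ) : Fin 2 → ℝ := ![a + b * Real.sqrt D, a - b * Real.sqrt D]

/-- The lattice `ℤⁿ` inside `ℝⁿ`. -/
def intLat (n : ℕ) : Submodule ℤ (Fin n → ℝ) :=
  Submodule.span ℤ (Set.range fun i : Fin n => (Pi.single i 1 : Fin n → ℝ))

def eE {n : ℕ} : (Fin n → ℝ) ≃ₗ[ℝ] EuclideanSpace ℝ (Fin n) :=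
  (WithLp.linearEquiv 2 ℝ (Fin n → ℝ)).symm

lemma sqnorm_eq_norm_sq {n : ℕ} (x : Fin n → ℝ) : sqnorm x = ‖eE x‖ ^ 2 := by
  rw [EuclideanSpace.norm_eq, Real.sq_sqrt (by positivity)]
  simp [sqnorm, eE, WithLp.linearEquiv, Real.norm_eq_abs, sq_abs]

lemma sqnorm_nonneg' {n : ℕ} (x : Fin n → ℝ) : 0 ≤ sqnorm x := by
  unfold sqnorm; positivity

/-- in dimension `n ≤ 2`, the minimal vectors of a well-rounded
full-rank lattice generate the lattice over `ℤ`. -/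
theorem stmt_2 {n : ℕ} (hn : n ≤ 2) (L : Submodule ℤ (Fin n → ℝ))
    (hL : IsFullLattice L) (hWR : IsWellRounded L) :
    Submodule.span ℤ {x | IsMinVec L x} = L := by
  obtain ⟨v, hv, hli⟩ := hWR
  apply le_antisymm
  · rw [Submodule.span_le]; intro y hy; exact hy.1
  intro x hx
  rcases Nat.eq_zero_or_pos n with hn0 | hn0
  · subst hn0
    have : x = 0 := by funext i; exact i.elim0
    rw [this]; exact Submodule.zero_mem _
  -- basic facts about lambda1
  set S : Set ℝ := {r : ℝ | ∃ y ∈ L, y ≠ 0 ∧ sqnorm y = r} with hS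
  have hSbdd : BddBelow S := ⟨0, by rintro r ⟨y, -, -, rfl⟩; exact sqnorm_nonneg' y⟩
  haveI : Nonempty (Fin n) := ⟨⟨0, hn0⟩⟩
  obtain ⟨i0⟩ : Nonempty (Fin n) := inferInstance
  have hSne : S.Nonempty := ⟨sqnorm (v i0), v i0, (hv i0).1, (hv i0).2.1, rfl⟩
  have hlam_le : ∀ y, y ∈ L → y ≠ 0 → lambda1 L ≤ sqnorm y := fun y hy hy0 =>
    csInf_le hSbdd ⟨y, hy, hy0, rfl⟩
  have hlam_nonneg : 0 ≤ lambda1 L := le_csInf hSne (by rintro r ⟨y, -, -, rfl⟩; exact sqnorm_nonneg' y)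
  -- basis from v
  have hcard : Fintype.card (Fin n) = Module.finrank ℝ (Fin n → ℝ) := by simp
  let B := basisOfLinearIndependentOfCardEqFinrank hli hcard
  have hBv : ∀ i, B i = v i := fun i => congrFun (coe_basisOfLinearIndependentOfCardEqFinrank hli hcard) i
  set c : Fin n → ℝ := fun i => B.repr x i with hc
  set k : Fin n → ℤ := fun i => round (c i) with hk
  have hxsum : x = ∑ i, c i • v i := by
    conv_lhs => rw [← B.sum_repr x]
    exact Finset.sum_congr rfl fun i _ => by rw [hBv]
  set w : Fin n → ℝ := x - ∑ i, k i • v i with hw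
  have hwL : w ∈ L := by
    refine Submodule.sub_mem L hx (Submodule.sum_mem L fun i _ => ?_)
    exact Submodule.smul_mem L (k i) (hv i).1
  have hwsum : w = ∑ i, (c i - (k i : ℝ)) • v i := by
    rw [hw]
    conv_lhs => rw [hxsum]
    rw [← Finset.sum_sub_distrib]
    refine Finset.sum_congr rfl fun i _ => ?_
    rw [sub_smul]
    norm_num [← Int.cast_smul_eq_zsmul ℝ]
  -- norm of each v i
  have hnv : ∀ i, ‖eE (v i)‖ = Real.sqrt (lambda1 L) := by
    intro i
    have := sqnorm_eq_norm_sq (v i)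
    rw [(hv i).2.2] at this
    rw [this, Real.sqrt_sq (norm_nonneg _)]
  -- bound sqnorm w
  have hbound : sqnorm w ≤ lambda1 L := by
    have h1 : ‖eE w‖ ≤ Real.sqrt (lambda1 L) := by
      have : eE w = ∑ i, (c i - (k i : ℝ)) • eE (v i) := by
        rw [hwsum, map_sum]
        exact Finset.sum_congr rfl fun i _ => by rw [map_smul]
      rw [this]
      calc ‖∑ i, (c i - (k i : ℝ)) • eE (v i)‖
          ≤ ∑ i, ‖(c i - (k i : ℝ)) • eE (v i)‖ := norm_sum_le _ _
        _ = ∑ i, |c i - (k i : ℝ)| * Real.sqrt (lambda1 L) := by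
            refine Finset.sum_congr rfl fun i _ => ?_
            rw [norm_smul, Real.norm_eq_abs, hnv i]
        _ ≤ ∑ _i : Fin n, (1/2 : ℝ) * Real.sqrt (lambda1 L) := by
            refine Finset.sum_le_sum fun i _ => ?_
            have : |c i - (k i : ℝ)| ≤ 1/2 := abs_sub_round (c i)
            exact mul_le_mul_of_nonneg_right this (Real.sqrt_nonneg _)
        _ = (n : ℝ) * ((1/2) * Real.sqrt (lambda1 L)) := by
            rw [Finset.sum_const, Finset.card_univ, Fintype.card_fin, nsmul_eq_mul]
        _ ≤ Real.sqrt (lambda1 L) := by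
            have hn2 : (n : ℝ) ≤ 2 := by exact_mod_cast hn
            nlinarith [Real.sqrt_nonneg (lambda1 L)]
    calc sqnorm w = ‖eE w‖ ^ 2 := sqnorm_eq_norm_sq w
      _ ≤ Real.sqrt (lambda1 L) ^ 2 := by
          exact pow_le_pow_left₀ (norm_nonneg _) h1 2
      _ = lambda1 L := Real.sq_sqrt hlam_nonneg
  -- w is zero or minimal; either way in span
  have hwspan : w ∈ Submodule.span ℤ {x | IsMinVec L x} := by
    by_cases hw0 : w = 0
    · rw [hw0]; exact Submodule.zero_mem _
    · refine Submodule.subset_span ?_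
      exact ⟨hwL, hw0, le_antisymm hbound (hlam_le w hwL hw0)⟩
  have hvspan : ∀ i, v i ∈ Submodule.span ℤ {x | IsMinVec L x} := fun i =>
    Submodule.subset_span (hv i)
  have : x = w + ∑ i, k i • v i := by rw [hw]; abel
  rw [this]
  exact Submodule.add_mem _ hwspan
    (Submodule.sum_mem _ fun i _ => Submodule.smul_mem _ (k i) (hvspan i))
end
end

section
/- There exist infinitely many squarefree positive integers D with D ≡ 3 (mod 4) such that the ring of integers of ℚ(√D) contains a principal ideal whose image under the canonical embedding is a well-rounded lattice in ℝ². -/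
set_option maxHeartbeats 1000000
set_option maxRecDepth 8000


noncomputable section

open scoped BigOperators

lemma intIneq (m a b : ℤ) (hm : 2 ≤ m) (hab : ¬(a = 0 ∧ b = 0)) :
    (m-1)^2 + (m^2-1) ≤ (a+b)^2*(m-1)^2 + (a-b)^2*(m^2-1) := by
  rcases eq_or_ne (a+b) 0 with h1 | h1
  · have hb : b = -a := by omega
    have ha : a ≠ 0 := by rcases hab with h; omega
    have h4 : 4 ≤ (a-b)^2 := by
      have : 1 ≤ |a| := Int.one_le_abs ha
      have : 1 ≤ a^2 := by nlinarith [sq_abs a]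
      subst hb; nlinarith
    nlinarith [sq_nonneg (a+b), sq_nonneg (m-1)]
  · rcases eq_or_ne (a-b) 0 with h2 | h2
    · have hb : b = a := by omega
      have ha : a ≠ 0 := by rcases hab with h; omega
      have h4 : 4 ≤ (a+b)^2 := by
        have : 1 ≤ |a| := Int.one_le_abs ha
        have : 1 ≤ a^2 := by nlinarith [sq_abs a]
        subst hb; nlinarith
      nlinarith [sq_nonneg (a-b), sq_nonneg (m-1)]
    · have g1 : 1 ≤ (a+b)^2 := by
        have : 1 ≤ |a+b| := Int.one_le_abs h1
        nlinarith [sq_abs (a+b)]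
      have g2 : 1 ≤ (a-b)^2 := by
        have : 1 ≤ |a-b| := Int.one_le_abs h2
        nlinarith [sq_abs (a-b)]
      nlinarith [sq_nonneg (m-1)]

lemma wr_real (m : ℕ) (hm : 2 ≤ m) :
    IsWellRounded (Submodule.span ℤ
      ({embQ ((m:ℝ)^2-1) ((m:ℝ)-1) 1, embQ ((m:ℝ)^2-1) ((m:ℝ)^2-1) ((m:ℝ)-1)} :
        Set (Fin 2 → ℝ))) := by
  have hm' : (2:ℝ) ≤ (m:ℝ) := by exact_mod_cast hm
  set Dr : ℝ := (m:ℝ)^2-1 with hDr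
  set xr : ℝ := (m:ℝ)-1 with hxr
  have hDpos : 0 < Dr := by rw [hDr]; nlinarith
  have hx1 : 1 ≤ xr := by rw [hxr]; linarith
  set s : ℝ := Real.sqrt Dr with hsdef
  have hs2 : s * s = Dr := Real.mul_self_sqrt hDpos.le
  have hspos : 0 < s := Real.sqrt_pos.2 hDpos
  set v1 : Fin 2 → ℝ := embQ Dr xr 1 with hv1
  set v2 : Fin 2 → ℝ := embQ Dr Dr xr with hv2
  set w : Fin 2 → ℝ := embQ Dr xr (-1) with hwdef
  have hw : w = v2 - (m:ℤ) • v1 := by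
    funext i
    fin_cases i <;>
      simp [hwdef, hv1, hv2, embQ, Pi.smul_apply, zsmul_eq_mul] <;>
      · rw [hDr, hxr]; push_cast; ring
  set L := Submodule.span ℤ ({v1, v2} : Set (Fin 2 → ℝ)) with hL
  have hv1L : v1 ∈ L := Submodule.subset_span (by simp)
  have hv2L : v2 ∈ L := Submodule.subset_span (by simp)
  have hwL : w ∈ L := by rw [hw]; exact sub_mem hv2L (Submodule.smul_mem _ _ hv1L)
  -- every element of L is a • v1 + b • w
  have hrepr : ∀ z ∈ L, ∃ a b : ℤ, a • v1 + b • w = z := by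
    intro z hz
    rw [hL] at hz
    rw [Submodule.mem_span_pair] at hz
    obtain ⟨a, b, rfl⟩ := hz
    refine ⟨a + b * m, b, ?_⟩
    rw [hw]; push_cast
    module
  -- norm formula
  have hnorm : ∀ a b : ℤ, sqnorm ((a:ℤ) • v1 + (b:ℤ) • w)
      = 2*((a:ℝ)+(b:ℝ))^2*xr^2 + 2*((a:ℝ)-(b:ℝ))^2*Dr := by
    intro a b
    simp only [sqnorm, Fin.sum_univ_two, hv1, hwdef, embQ, Pi.add_apply, Pi.smul_apply,
      zsmul_eq_mul, Pi.mul_apply, Pi.intCast_apply,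
      Matrix.cons_val_zero, Matrix.cons_val_one, Matrix.head_cons]
    rw [← hsdef]
    linear_combination (2*((a:ℝ)-(b:ℝ))^2) * hs2
  set N' : ℝ := 2*(xr^2 + Dr) with hN'
  have hlow : ∀ z ∈ L, z ≠ 0 → N' ≤ sqnorm z := by
    intro z hz hzne
    obtain ⟨a, b, rfl⟩ := hrepr z hz
    have hab : ¬(a = 0 ∧ b = 0) := by
      rintro ⟨rfl, rfl⟩; simp at hzne
    have := intIneq (m:ℤ) a b (by exact_mod_cast hm) hab
    have hcast : ((m:ℝ)-1)^2 + ((m:ℝ)^2-1)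
        ≤ ((a:ℝ)+(b:ℝ))^2*((m:ℝ)-1)^2 + ((a:ℝ)-(b:ℝ))^2*((m:ℝ)^2-1) := by
      exact_mod_cast this
    rw [hnorm a b, hN', hxr, hDr]
    linarith
  have hv1ne : v1 ≠ 0 := by
    intro h
    have := congrFun h 0
    simp [hv1, embQ] at this
    rw [← hsdef] at this
    linarith
  have hwne : w ≠ 0 := by
    intro h
    have := congrFun h 1
    simp [hwdef, embQ] at this
    rw [← hsdef] at this
    linarith
  have hnv1 : sqnorm v1 = N' := by
    have h10 := hnorm 1 0
    simp only [one_smul, zero_smul, add_zero, Int.cast_one, Int.cast_zero] at h10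
    rw [h10, hN']; ring
  have hnw : sqnorm w = N' := by
    have h01 := hnorm 0 1
    simp only [one_smul, zero_smul, zero_add, Int.cast_one, Int.cast_zero] at h01
    rw [h01, hN']; ring
  -- lambda1 L = N'
  have hSmem : N' ∈ {r : ℝ | ∃ x ∈ L, x ≠ 0 ∧ sqnorm x = r} := ⟨v1, hv1L, hv1ne, hnv1⟩
  have hSbdd : BddBelow {r : ℝ | ∃ x ∈ L, x ≠ 0 ∧ sqnorm x = r} := by
    refine ⟨N', ?_⟩
    rintro r ⟨z, hz, hzne, rfl⟩
    exact hlow z hz hzne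
  have hlam : lambda1 L = N' := by
    refine le_antisymm (csInf_le hSbdd hSmem) (le_csInf ⟨N', hSmem⟩ ?_)
    rintro r ⟨z, hz, hzne, rfl⟩
    exact hlow z hz hzne
  refine ⟨![v1, w], ?_, ?_⟩
  · intro i
    fin_cases i
    · exact ⟨hv1L, hv1ne, hnv1.trans hlam.symm⟩
    · exact ⟨hwL, hwne, hnw.trans hlam.symm⟩
  · rw [LinearIndependent.pair_iff]
    intro p q h
    have h0 := congrFun h 0
    have h1 := congrFun h 1
    simp [hv1, hwdef, embQ, Pi.smul_apply, smul_eq_mul] at h0 h1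
    rw [← hsdef] at h0 h1
    have e1 : (p + q) * (2*xr) = 0 := by linear_combination h0 + h1
    have e2 : (p - q) * (2*s) = 0 := by linear_combination h0 - h1
    have hp : p + q = 0 := by
      rcases mul_eq_zero.1 e1 with h | h
      · exact h
      · linarith
    have hq : p - q = 0 := by
      rcases mul_eq_zero.1 e2 with h | h
      · exact h
      · linarith
    constructor <;> linarith


lemma odd_coprime_two {n : ℕ} (h : Odd n) : Nat.Coprime n 2 := by
  rw [Nat.coprime_comm]
  refine (Nat.Prime.coprime_iff_not_dvd Nat.prime_two).mpr ?_
  intro hdvd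
  rw [Nat.odd_iff] at h
  omega

lemma card_gap {s : Finset ℕ} {d N K : ℕ} (hd : 0 < d)
    (hs : s ⊆ Finset.Ioc N K)
    (hgap : ∀ a ∈ s, ∀ b ∈ s, a < b → a + d ≤ b) :
    s.card ≤ (K - N - 1) / d + 1 := by
  classical
  have key : s.card ≤ (Finset.range ((K - N - 1)/d + 1)).card := by
    apply Finset.card_le_card_of_injOn (fun k => (k - (N+1)) / d)
    · intro k hk
      have hk' := hs hk
      simp only [Finset.mem_Ioc] at hk'
      simp only [Finset.mem_range]
      have h1 : k - (N+1) ≤ K - N - 1 := by omega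
      have := Nat.div_le_div_right (c := d) h1
      simpa [Finset.mem_coe, Finset.mem_range] using Nat.lt_succ_of_le this
    · intro a ha b hb hab
      simp only [Finset.coe_sort_coe, Finset.mem_coe] at ha hb
      by_contra hne
      have hmain : ∀ x y : ℕ, x ∈ s → y ∈ s → x < y →
          (x - (N+1))/d ≠ (y - (N+1))/d := by
        intro x y hx hy hxy
        have hge := hgap x hx y hy hxy
        have hxN := (Finset.mem_Ioc.1 (hs hx)).1
        have hyN := (Finset.mem_Ioc.1 (hs hy)).1
        have h1 : (x - (N+1)) + d ≤ y - (N+1) := by omega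
        have h2 : ((x - (N+1)) + d)/d = (x - (N+1))/d + 1 := Nat.add_div_right _ hd
        have h3 := Nat.div_le_div_right (c := d) h1
        omega
      rcases lt_trichotomy a b with h | h | h
      · exact hmain a b ha hb h hab
      · exact hne h
      · exact hmain b a hb ha h hab.symm
  simpa using key

lemma sum_odd_sq (J : ℕ) :
    ∑ j ∈ Finset.Icc 1 J, (1:ℝ)/((2*(j:ℝ)+1)*(2*(j:ℝ)+1)) ≤ 1/4 - 1/(4*((J:ℝ)+1)) := by
  induction J with
  | zero => simp
  | succ n ih =>
    rw [Finset.sum_Icc_succ_top (by omega)]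
    have hpos1 : (0:ℝ) < 4*((n:ℝ)+1)*((n:ℝ)+2) := by positivity
    have e : 1/(4*((n:ℝ)+1)) - 1/(4*((n:ℝ)+2)) = 1/(4*((n:ℝ)+1)*((n:ℝ)+2)) := by
      field_simp; ring
    have step : (1:ℝ)/((2*((n:ℝ)+1)+1)*(2*((n:ℝ)+1)+1))
        ≤ 1/(4*((n:ℝ)+1)) - 1/(4*((n:ℝ)+2)) := by
      rw [e]
      apply one_div_le_one_div_of_le hpos1
      nlinarith [sq_nonneg ((n:ℝ)+1)]
    have e1 : (2*((n+1:ℕ):ℝ)+1) = (2*((n:ℝ)+1)+1) := by push_cast; ring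
    have e2 : (1:ℝ)/(4*(((n+1:ℕ):ℝ)+1)) = 1/(4*((n:ℝ)+2)) := by push_cast; ring_nf
    rw [e1, e2]
    linarith

lemma exists_good (N : ℕ) : ∃ k, N < k ∧ Squarefree (4*k^2 - 1) := by
  classical
  by_contra hcon
  push_neg at hcon
  set K := (N+10)^4 with hK
  set M := Nat.sqrt (2*K+1) with hM
  set P := (Finset.Icc 3 M).filter Nat.Prime with hP
  set A : ℕ → Finset ℕ := fun p => (Finset.Ioc N K).filter (fun k => p*p ∣ 2*k - 1) with hA
  set B : ℕ → Finset ℕ := fun p => (Finset.Ioc N K).filter (fun k => p*p ∣ 2*k + 1) with hB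
  -- cover
  have hcover : Finset.Ioc N K ⊆ P.biUnion (fun p => A p ∪ B p) := by
    intro k hk
    have hkIoc := Finset.mem_Ioc.1 hk
    have hk1 : 1 ≤ k := by omega
    have hbad := hcon k hkIoc.1
    have e : 4*k^2 - 1 = (2*k-1)*(2*k+1) := by
      have h2 : (2*k-1)*(2*k+1) + 1 = 4*k^2 := by
        obtain ⟨j, rfl⟩ := Nat.exists_eq_add_of_le hk1
        have h3 : 2*(1+j)-1 = 2*j+1 := by omega
        have h4 : 2*(1+j)+1 = 2*j+3 := by omega
        rw [h3, h4]; ring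
      exact Nat.sub_eq_of_eq_add h2.symm
    rw [e] at hbad
    rw [Nat.squarefree_iff_prime_squarefree] at hbad
    push_neg at hbad
    obtain ⟨p, hp, hdvd⟩ := hbad
    have odd1 : Odd (2*k-1) := ⟨k-1, by omega⟩
    have odd2 : Odd (2*k+1) := ⟨k, by omega⟩
    have hpne2 : p ≠ 2 := by
      rintro rfl
      have h2 : 2 ∣ (2*k-1)*(2*k+1) := dvd_trans (dvd_mul_right 2 2) hdvd
      have hodd := (odd1.mul odd2)
      rw [Nat.odd_iff] at hodd
      omega
    have hcop : Nat.Coprime (2*k-1) (2*k+1) := by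
      have hg1 := Nat.gcd_dvd_left (2*k-1) (2*k+1)
      have hg2 := Nat.gcd_dvd_right (2*k-1) (2*k+1)
      have hgd : Nat.gcd (2*k-1) (2*k+1) ∣ 2 := by
        have hsub := Nat.dvd_sub hg2 hg1
        have e2 : (2*k+1) - (2*k-1) = 2 := by omega
        rwa [e2] at hsub
      rcases (Nat.dvd_prime Nat.prime_two).mp hgd with h | h
      · exact h
      · exfalso
        have h2 : 2 ∣ 2*k+1 := by rw [h] at hg2; exact hg2
        omega
    have hpd : p ∣ (2*k-1)*(2*k+1) := dvd_trans (dvd_mul_right p p) hdvd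
    have hsplit : p*p ∣ 2*k-1 ∨ p*p ∣ 2*k+1 := by
      rcases (Nat.Prime.dvd_mul hp).1 hpd with h | h
      · left
        have hc : Nat.Coprime p (2*k+1) := Nat.Coprime.coprime_dvd_left h hcop
        exact Nat.Coprime.dvd_of_dvd_mul_right (Nat.Coprime.mul hc hc) hdvd
      · right
        have hc : Nat.Coprime p (2*k-1) := Nat.Coprime.coprime_dvd_left h hcop.symm
        exact Nat.Coprime.dvd_of_dvd_mul_left (Nat.Coprime.mul hc hc) hdvd
    have hpM : p ≤ M := by
      rw [hM]
      apply Nat.le_sqrt.2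
      rcases hsplit with h | h
      · have := Nat.le_of_dvd (by omega) h
        omega
      · have := Nat.le_of_dvd (by omega) h
        omega
    have hpP : p ∈ P := by
      rw [hP, Finset.mem_filter, Finset.mem_Icc]
      exact ⟨⟨by have := hp.two_le; omega, hpM⟩, hp⟩
    rw [Finset.mem_biUnion]
    refine ⟨p, hpP, ?_⟩
    simp only [hA, hB, Finset.mem_union, Finset.mem_filter]
    rcases hsplit with h | h
    · exact Or.inl ⟨hk, h⟩
    · exact Or.inr ⟨hk, h⟩
  -- card bounds per prime
  have hcards : ∀ p ∈ P, (A p ∪ B p).card ≤ 2*((K-N-1)/(p*p)) + 2 := by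
    intro p hpP
    rw [hP, Finset.mem_filter, Finset.mem_Icc] at hpP
    obtain ⟨⟨hp3, hpM⟩, hp⟩ := hpP
    have hpodd : Odd p := hp.odd_of_ne_two (by omega)
    have hppodd : Odd (p*p) := hpodd.mul hpodd
    have hpp : 0 < p*p := by positivity
    have hcop2 : Nat.Coprime (p*p) 2 := odd_coprime_two hppodd
    have hApB : (A p).card ≤ (K-N-1)/(p*p) + 1 := by
      apply card_gap hpp (Finset.filter_subset _ _)
      intro a ha b hb hab
      rw [Finset.mem_filter] at ha hb
      have haN := (Finset.mem_Ioc.1 ha.1).1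
      have hd := Nat.dvd_sub hb.2 ha.2
      have e2 : (2*b-1) - (2*a-1) = 2*(b-a) := by omega
      rw [e2] at hd
      have hdvd' : p*p ∣ b - a := Nat.Coprime.dvd_of_dvd_mul_left hcop2 hd
      have := Nat.le_of_dvd (by omega) hdvd'
      omega
    have hBpB : (B p).card ≤ (K-N-1)/(p*p) + 1 := by
      apply card_gap hpp (Finset.filter_subset _ _)
      intro a ha b hb hab
      rw [Finset.mem_filter] at ha hb
      have hd := Nat.dvd_sub hb.2 ha.2
      have e2 : (2*b+1) - (2*a+1) = 2*(b-a) := by omega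
      rw [e2] at hd
      have hdvd' : p*p ∣ b - a := Nat.Coprime.dvd_of_dvd_mul_left hcop2 hd
      have := Nat.le_of_dvd (by omega) hdvd'
      omega
    calc (A p ∪ B p).card ≤ (A p).card + (B p).card := Finset.card_union_le _ _
      _ ≤ 2*((K-N-1)/(p*p)) + 2 := by omega
  -- natural number inequality
  have h1 : K - N ≤ ∑ p ∈ P, (2*((K-N-1)/(p*p)) + 2) := by
    calc K - N = (Finset.Ioc N K).card := (Nat.card_Ioc N K).symm
      _ ≤ (P.biUnion (fun p => A p ∪ B p)).card := Finset.card_le_card hcover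
      _ ≤ ∑ p ∈ P, (A p ∪ B p).card := Finset.card_biUnion_le
      _ ≤ ∑ p ∈ P, (2*((K-N-1)/(p*p)) + 2) := Finset.sum_le_sum hcards
  -- pass to reals
  set L := K - N - 1 with hLdef
  have h2 : ((K - N : ℕ) : ℝ) ≤ ∑ p ∈ P, (2*((L:ℝ)/((p:ℝ)*(p:ℝ))) + 2) := by
    have hc1 : ((K - N : ℕ) : ℝ) ≤ ((∑ p ∈ P, (2*(L/(p*p)) + 2) : ℕ) : ℝ) := by
      exact_mod_cast h1
    rw [Nat.cast_sum] at hc1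
    refine le_trans hc1 (Finset.sum_le_sum ?_)
    intro p _
    have hc : ((L/(p*p) : ℕ) : ℝ) ≤ (L:ℝ)/((p:ℝ)*(p:ℝ)) := by
      have hle := Nat.cast_div_le (α := ℝ) (m := L) (n := p*p)
      push_cast at hle
      exact hle
    push_cast
    linarith
  -- bound the sum over P
  set Q : Finset ℕ := Finset.image (fun j => 2*j+1) (Finset.Icc 1 M) with hQ
  have hsub : P ⊆ Q := by
    intro p hpP
    rw [hP, Finset.mem_filter, Finset.mem_Icc] at hpP
    obtain ⟨⟨hp3, hpM⟩, hp⟩ := hpP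
    have hpodd : Odd p := hp.odd_of_ne_two (by omega)
    obtain ⟨j, hj⟩ := hpodd
    rw [hQ, Finset.mem_image]
    exact ⟨j, Finset.mem_Icc.2 ⟨by omega, by omega⟩, by omega⟩
  have h3 : ∑ p ∈ P, (L:ℝ)/((p:ℝ)*(p:ℝ)) ≤ (L:ℝ) * (1/4) := by
    calc ∑ p ∈ P, (L:ℝ)/((p:ℝ)*(p:ℝ))
        ≤ ∑ p ∈ Q, (L:ℝ)/((p:ℝ)*(p:ℝ)) := by
          apply Finset.sum_le_sum_of_subset_of_nonneg hsub
          intro p _ _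
          positivity
      _ = ∑ j ∈ Finset.Icc 1 M, (L:ℝ)/((2*(j:ℝ)+1)*(2*(j:ℝ)+1)) := by
          rw [hQ, Finset.sum_image (by intro x _ y _ h; simp only at h; omega)]
          apply Finset.sum_congr rfl
          intro j _
          have hj : ((2*j+1:ℕ):ℝ) = 2*(j:ℝ)+1 := by push_cast; ring
          rw [hj]
      _ = (L:ℝ) * ∑ j ∈ Finset.Icc 1 M, (1:ℝ)/((2*(j:ℝ)+1)*(2*(j:ℝ)+1)) := by
          rw [Finset.mul_sum]
          apply Finset.sum_congr rfl
          intro j _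
          rw [mul_one_div]
      _ ≤ (L:ℝ) * (1/4) := by
          apply mul_le_mul_of_nonneg_left _ (by positivity)
          have hso := sum_odd_sq M
          have h4 : (0:ℝ) < 1/(4*((M:ℝ)+1)) := by positivity
          linarith
  have hcardP : (P.card : ℝ) ≤ (M:ℝ) := by
    have h4 : P.card ≤ (Finset.Icc 3 M).card := Finset.card_filter_le _ _
    rw [Nat.card_Icc] at h4
    exact_mod_cast le_trans h4 (by omega)
  have h5 : ((K - N : ℕ) : ℝ) ≤ 2*((L:ℝ)*(1/4)) + 2*(M:ℝ) := by
    have e : ∑ p ∈ P, (2*((L:ℝ)/((p:ℝ)*(p:ℝ))) + 2)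
        = 2*(∑ p ∈ P, (L:ℝ)/((p:ℝ)*(p:ℝ))) + 2*(P.card : ℝ) := by
      rw [Finset.sum_add_distrib, ← Finset.mul_sum, Finset.sum_const, nsmul_eq_mul]
      ring
    rw [e] at h2
    have hsum_nonneg : (0:ℝ) ≤ ∑ p ∈ P, (L:ℝ)/((p:ℝ)*(p:ℝ)) := by
      apply Finset.sum_nonneg; intro p _; positivity
    linarith
  -- final contradiction
  have hLle : (L:ℝ) ≤ ((K-N:ℕ):ℝ) := by
    have : L ≤ K - N := by omega
    exact_mod_cast this
  have h6 : ((K-N:ℕ):ℝ) ≤ 4*(M:ℝ) := by linarith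
  have h7 : K - N ≤ 4*M := by exact_mod_cast h6
  have hMle : M ≤ 2*(N+10)^2 := by
    rw [hM]
    have e : (2*(N+10)^2) * (2*(N+10)^2) = 4*(N+10)^4 := by ring
    calc Nat.sqrt (2*K+1) ≤ Nat.sqrt ((2*(N+10)^2) * (2*(N+10)^2)) := by
          apply Nat.sqrt_le_sqrt
          rw [e, hK]
          nlinarith [Nat.one_le_iff_ne_zero.2 (by positivity : (N+10)^4 ≠ 0)]
      _ = 2*(N+10)^2 := Nat.sqrt_eq _
  have hbig : N + 4*(2*(N+10)^2) < (N+10)^4 := by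
    have ha : N + 9 ≤ (N+10)^2 := by nlinarith
    have hc : (100:ℕ) ≤ (N+10)^2 := by nlinarith
    have hb : (N+10)^4 = (N+10)^2*(N+10)^2 := by ring
    have hd : 100*(N+10)^2 ≤ (N+10)^2*(N+10)^2 := mul_le_mul_left hc ((N+10)^2)
    have he : N + 4*(2*(N+10)^2) < 100*(N+10)^2 := by linarith
    calc N + 4*(2*(N+10)^2) < 100*(N+10)^2 := he
      _ ≤ (N+10)^2*(N+10)^2 := hd
      _ = (N+10)^4 := hb.symm
  have hfin : K - N ≤ 4*(2*(N+10)^2) := le_trans h7 (by omega)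
  rw [hK] at hfin
  omega


/-- infinitely many squarefree `D ≡ 3 (mod 4)` admit a principal ideal
`(x + y√D)` of `ℤ[√D]` whose canonical-embedding lattice
(`ℤ`-spanned by `σ(α)` and `σ(α√D)`) is well-rounded. -/
theorem stmt_5 :
    {D : ℕ | Squarefree D ∧ D % 4 = 3 ∧
      ∃ x y : ℤ, ¬(x = 0 ∧ y = 0) ∧
        IsWellRounded (Submodule.span ℤ
          {embQ D x y, embQ D (y * D) x})}.Infinite := by
  have hsub : (fun k : ℕ => 4*k^2 - 1) '' {k : ℕ | 0 < k ∧ Squarefree (4*k^2 - 1)} ⊆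
      {D : ℕ | Squarefree D ∧ D % 4 = 3 ∧
      ∃ x y : ℤ, ¬(x = 0 ∧ y = 0) ∧
        IsWellRounded (Submodule.span ℤ
          {embQ D x y, embQ D (y * D) x})} := by
    rintro D ⟨k, ⟨hk, hsf⟩, rfl⟩
    refine ⟨hsf, ?_, 2*(k:ℤ)-1, 1, ?_, ?_⟩
    · obtain ⟨t, ht⟩ : ∃ t, k^2 = t := ⟨_, rfl⟩
      have ht1 : 1 ≤ t := by
        rw [← ht]; exact Nat.one_le_iff_ne_zero.2 (pow_pos hk 2).ne'
      simp only [ht]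
      omega
    · rintro ⟨h1, h2⟩
      exact one_ne_zero h2
    · have hwr := wr_real (2*k) (by omega)
      convert hwr using 2
      have h4 : 1 ≤ 4*k^2 := Nat.one_le_iff_ne_zero.2 (Nat.mul_ne_zero (by norm_num) (pow_pos hk 2).ne')
      push_cast [h4]
      ring_nf
  have hT : {k : ℕ | 0 < k ∧ Squarefree (4*k^2 - 1)}.Infinite := by
    apply Set.infinite_of_not_bddAbove
    rintro ⟨b, hb⟩
    obtain ⟨k, hk1, hk2⟩ := exists_good b
    have := hb (Set.mem_setOf.2 ⟨by omega, hk2⟩)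
    omega
  have hinj : Set.InjOn (fun k : ℕ => 4*k^2 - 1) {k : ℕ | 0 < k ∧ Squarefree (4*k^2 - 1)} := by
    rintro k1 ⟨hk1, -⟩ k2 ⟨hk2, -⟩ h
    simp only at h
    have e1 : 1 ≤ 4*k1^2 := Nat.one_le_iff_ne_zero.2 (Nat.mul_ne_zero (by norm_num) (pow_pos hk1 2).ne')
    have e2 : 1 ≤ 4*k2^2 := Nat.one_le_iff_ne_zero.2 (Nat.mul_ne_zero (by norm_num) (pow_pos hk2 2).ne')
    have h4 : 4*k1^2 = 4*k2^2 := by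
      have := congrArg (· + 1) h
      simpa [Nat.sub_add_cancel e1, Nat.sub_add_cancel e2] using this
    have h5 : k1^2 = k2^2 := by
      exact Nat.eq_of_mul_eq_mul_left (by norm_num) h4
    exact Nat.pow_left_injective (by norm_num) h5
  exact Set.Infinite.mono hsub (hT.image hinj)
end
end

section
/- There exist infinitely many squarefree positive integers D with D ≡ 1 (mod 4) such that the ring of integers of ℚ(√D) contains a principal ideal whose image under the canonical embedding is a well-rounded lattice in ℝ². -/
noncomputable section

open scoped BigOperators

theorem my_zsq_ge (a : ℤ) (h : a ≠ 0) : (1:ℝ) ≤ (a:ℝ)^2 := by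
  have h1 : (1:ℤ) ≤ a^2 := by nlinarith [Int.one_le_abs h, sq_abs a, abs_nonneg a]
  exact_mod_cast h1

theorem my_quad_bound (p q : ℝ) (hc : 4*|p*q| ≤ p^2+q^2) (A B : ℤ) (h : ¬(A = 0 ∧ B = 0)) :
    p^2+q^2 ≤ ((A:ℝ)*p+(B:ℝ)*q)^2 + ((A:ℝ)*q+(B:ℝ)*p)^2 := by
  have habs : (0:ℝ) ≤ |p*q| := abs_nonneg _
  rcases eq_or_ne A 0 with hA | hA
  · have hB : B ≠ 0 := fun hB => h ⟨hA, hB⟩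
    have h2 := my_zsq_ge B hB
    subst hA
    push_cast
    nlinarith [sq_nonneg ((B:ℝ)*p), sq_nonneg ((B:ℝ)*q)]
  · rcases eq_or_ne B 0 with hB | hB
    · have h1 := my_zsq_ge A hA
      subst hB
      push_cast
      nlinarith [sq_nonneg ((A:ℝ)*p), sq_nonneg ((A:ℝ)*q)]
    · have h1 := my_zsq_ge A hA
      have h2 := my_zsq_ge B hB
      have hxy : 1 ≤ |(A:ℝ) * (B:ℝ)| := by
        have h3 : 1 ≤ ((A:ℝ)*(B:ℝ))^2 := by nlinarith
        nlinarith [abs_nonneg ((A:ℝ)*(B:ℝ)), sq_abs ((A:ℝ)*(B:ℝ))]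
      have e1 : |(A:ℝ) * (B:ℝ) * (p*q)| = |(A:ℝ) * (B:ℝ)| * |p*q| := abs_mul _ _
      have e2 : -(|(A:ℝ) * (B:ℝ)| * |p*q|) ≤ (A:ℝ) * (B:ℝ) * (p*q) := by
        have hn := neg_abs_le ((A:ℝ) * (B:ℝ) * (p*q)); rw [e1] at hn; exact hn
      have e3 : |(A:ℝ) * (B:ℝ)| * (4*|p*q|) ≤ |(A:ℝ) * (B:ℝ)| * (p^2+q^2) :=
        mul_le_mul_of_nonneg_left hc (abs_nonneg _)
      have e5 : |(A:ℝ) * (B:ℝ)| + 1 ≤ (A:ℝ)^2 + (B:ℝ)^2 := by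
        nlinarith [sq_abs (A:ℝ), sq_abs (B:ℝ), sq_nonneg (|(A:ℝ)| - |(B:ℝ)|),
          abs_mul (A:ℝ) (B:ℝ), abs_nonneg (A:ℝ), abs_nonneg (B:ℝ)]
      nlinarith [mul_le_mul_of_nonneg_right e5 (show (0:ℝ) ≤ p^2+q^2 by positivity), e2, e3]

theorem my_wr_of_pair (p q : ℝ) (c : ℤ) (u v : Fin 2 → ℝ)
    (hu : u = ![p, q]) (hv : v = c • u + ![q, p])
    (hpq : p + q ≠ 0) (hne : p ≠ q) (hq : q ≠ 0)
    (hc : 4 * |p * q| ≤ p ^ 2 + q ^ 2) :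
    IsWellRounded (Submodule.span ℤ ({u, v} : Set (Fin 2 → ℝ))) := by
  set w : Fin 2 → ℝ := ![q, p] with hw
  set L := Submodule.span ℤ ({u, v} : Set (Fin 2 → ℝ)) with hL
  have hu_mem : u ∈ L := Submodule.subset_span (by simp)
  have hv_mem : v ∈ L := Submodule.subset_span (by simp)
  have hw_mem : w ∈ L := by
    have hww : w = v - c • u := by rw [hv]; abel
    rw [hww]; exact Submodule.sub_mem _ hv_mem (Submodule.smul_mem _ _ hu_mem)
  have hrep : ∀ z ∈ L, ∃ A B : ℤ, z = A • u + B • w := by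
    intro z hz
    rw [hL, Submodule.mem_span_pair] at hz
    obtain ⟨a, b, hab⟩ := hz
    refine ⟨a + b*c, b, ?_⟩
    rw [← hab, hv]
    module
  have comp : ∀ (A B : ℤ), sqnorm ((A:ℤ) • u + (B:ℤ) • w) =
      ((A:ℝ)*p+(B:ℝ)*q)^2 + ((A:ℝ)*q+(B:ℝ)*p)^2 := by
    intro A B
    simp only [sqnorm, Fin.sum_univ_two, hu, hw, Pi.add_apply, Pi.smul_apply,
      Matrix.cons_val_zero, Matrix.cons_val_one, Matrix.head_cons, zsmul_eq_mul,
      Pi.mul_apply, Pi.intCast_apply]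
  have hNu : sqnorm u = p^2 + q^2 := by
    simp [sqnorm, Fin.sum_univ_two, hu]
  have hNw : sqnorm w = p^2 + q^2 := by
    simp [sqnorm, Fin.sum_univ_two, hw]; ring
  have hu0 : u ≠ 0 := by
    intro h0
    apply hpq
    have h1 := congrFun h0 0
    have h2 := congrFun h0 1
    simp [hu] at h1 h2
    rw [h1, h2]; ring
  have hw0 : w ≠ 0 := by
    intro h0
    apply hq
    have h1 := congrFun h0 0
    simpa [hw] using h1
  have hlam : lambda1 L = p^2 + q^2 := by
    apply le_antisymm
    · apply csInf_le
      · refine ⟨0, fun r hr => ?_⟩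
        obtain ⟨z, _, _, hzr⟩ := hr
        rw [← hzr]
        exact Finset.sum_nonneg fun i _ => sq_nonneg _
      · exact ⟨u, hu_mem, hu0, hNu⟩
    · refine le_csInf ⟨p^2+q^2, ⟨u, hu_mem, hu0, hNu⟩⟩ ?_
      rintro r ⟨z, hz, hz0, rfl⟩
      obtain ⟨A, B, rfl⟩ := hrep z hz
      have hAB : ¬(A = 0 ∧ B = 0) := by
        rintro ⟨rfl, rfl⟩
        simp at hz0
      rw [comp]
      exact my_quad_bound p q hc A B hAB
  refine ⟨![u, w], ?_, ?_⟩
  · intro i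
    fin_cases i
    · exact ⟨hu_mem, hu0, by rw [hlam]; exact hNu⟩
    · exact ⟨hw_mem, hw0, by rw [hlam]; exact hNw⟩
  · rw [show (![u, w] : Fin 2 → Fin 2 → ℝ) = ![u, w] from rfl, linearIndependent_fin2]
    refine ⟨hw0, fun a ha => ?_⟩
    have h0 := congrFun ha 0
    have h1 := congrFun ha 1
    simp [hu, hw] at h0 h1
    -- h0 : a * q = p, h1 : a * p = q
    have e : a^2 * q = q := by
      calc a^2*q = a*(a*q) := by ring
        _ = a*p := by rw [h0]
        _ = q := h1
    have ha2 : a^2 = 1 := by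
      have := mul_right_cancel₀ hq (e.trans (one_mul q).symm)
      linarith [this]
    have : (a-1)*(a+1) = 0 := by nlinarith
    rcases mul_eq_zero.mp this with h' | h'
    · have : a = 1 := by linarith
      rw [this, one_mul] at h0
      exact hne h0.symm
    · have : a = -1 := by linarith
      rw [this] at h0
      apply hpq; linarith

theorem my_key (j : ℕ) :
    ∃ x y : ℤ, ¬(x = 0 ∧ y = 0) ∧
      IsWellRounded (Submodule.span ℤ
        {embQ ((2*j+3)*(2*j+7) : ℕ) ((x : ℝ) + y / 2) (y / 2),
         embQ ((2*j+3)*(2*j+7) : ℕ)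
           ((y : ℝ) * (((2*j+3)*(2*j+7) : ℕ) - 1) / 4 + (x + y) / 2) (((x : ℝ) + y) / 2)}) := by
  have hcast : (((2*j+3)*(2*j+7) : ℕ) : ℝ) = (2*(j:ℝ)+3)*(2*(j:ℝ)+7) := by push_cast; ring
  rw [hcast]
  have hD0 : (0:ℝ) < (2*(j:ℝ)+3)*(2*(j:ℝ)+7) := by positivity
  set s := Real.sqrt ((2*(j:ℝ)+3)*(2*(j:ℝ)+7)) with hs
  have hs0 : 0 < s := Real.sqrt_pos.mpr hD0
  have hs2 : s^2 = (2*(j:ℝ)+3)*(2*(j:ℝ)+7) := Real.sq_sqrt hD0.le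
  have hsc : (2*(j:ℝ)+3) < s := by
    rw [hs]
    have h1 : (2*(j:ℝ)+3) = Real.sqrt ((2*(j:ℝ)+3)^2) := (Real.sqrt_sq (by positivity)).symm
    rw [h1]
    apply Real.sqrt_lt_sqrt (by positivity)
    nlinarith [Nat.cast_nonneg (α := ℝ) j]
  set p := (2*(j:ℝ)+3)/2 + s/2 with hp
  set q := (2*(j:ℝ)+3)/2 - s/2 with hq
  refine ⟨(j:ℤ)+1, 1, by simp, ?_⟩
  apply my_wr_of_pair p q ((j:ℤ)+3)
  · -- first vector = ![p, q]
    funext i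
    fin_cases i <;>
      · simp [embQ, hp, hq]
        rw [← hs]
        push_cast
        ring
  · -- second vector = c • u + ![q, p]
    funext i
    fin_cases i <;>
      · simp [embQ, hp, hq, Pi.smul_apply, zsmul_eq_mul]
        rw [← hs]
        push_cast
        ring
  · -- p + q ≠ 0
    have h1 : p + q = 2*(j:ℝ)+3 := by rw [hp, hq]; ring
    rw [h1]; positivity
  · -- p ≠ q
    intro h
    rw [hp, hq] at h
    linarith
  · -- q ≠ 0
    have h1 : q < 0 := by rw [hq]; linarith
    exact ne_of_lt h1
  · -- cross bound
    have hpq2 : p*q = -(2*(j:ℝ)+3) := by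
      have h1 : p*q = (2*(j:ℝ)+3)^2/4 - s^2/4 := by rw [hp, hq]; ring
      rw [hs2] at h1
      rw [h1]; ring
    have hsum : p^2+q^2 = ((2*(j:ℝ)+3)^2 + s^2)/2 := by rw [hp, hq]; ring
    rw [hpq2, abs_neg, abs_of_nonneg (by positivity), hsum, hs2]
    nlinarith [Nat.cast_nonneg (α := ℝ) j]

theorem my_aux_sum (n : ℕ) :
    ∑ i ∈ Finset.range (n+1), (1:ℝ)/(2*i+3)^2 ≤ 17/72 - 1/(4*((n:ℝ)+2)) := by
  induction n with
  | zero => norm_num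
  | succ k ih =>
      rw [Finset.sum_range_succ]
      have h1 : (1:ℝ)/(2*((k:ℝ)+1)+3)^2 ≤ 1/(4*((k:ℝ)+2)) - 1/(4*((k:ℝ)+3)) := by
        rw [div_sub_div _ _ (by positivity) (by positivity)]
        rw [div_le_div_iff₀ (by positivity) (by positivity)]
        nlinarith [Nat.cast_nonneg (α := ℝ) k]
      have hc : ((k+1 : ℕ) : ℝ) = (k:ℝ)+1 := by push_cast; ring
      rw [hc]
      have h3 : (4*((k:ℝ)+1+2)) = 4*((k:ℝ)+3) := by ring
      rw [h3]
      linarith [ih, h1]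

theorem my_sum_bound (n : ℕ) :
    ∑ i ∈ Finset.range n, (1:ℝ)/(2*i+3)^2 ≤ 17/72 := by
  cases n with
  | zero => norm_num
  | succ k =>
      have h := my_aux_sum k
      have h2 : (0:ℝ) < 1/(4*((k:ℝ)+2)) := by positivity
      linarith

theorem my_sieve (N : ℕ) : ∃ j, N < j ∧ Squarefree ((2*j+3)*(2*j+7)) := by
  by_contra hcon
  push_neg at hcon
  obtain ⟨T, hT⟩ : ∃ T, T = 100000*(N+1) := ⟨_, rfl⟩
  obtain ⟨M, hM⟩ : ∃ M, M = 2*N+2*T+7 := ⟨_, rfl⟩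
  obtain ⟨R, hR⟩ : ∃ R, R = Nat.sqrt M := ⟨_, rfl⟩
  obtain ⟨K, hK⟩ : ∃ K : Finset ℕ, K = Finset.Ioc N (N+T) := ⟨_, rfl⟩
  -- every j in K admits an odd square divisor of one of the two factors
  have hwit : ∀ j ∈ K, ∃ i, i < R ∧
      ((2*i+3)*(2*i+3) ∣ 2*j+3 ∨ (2*i+3)*(2*i+3) ∣ 2*j+7) := by
    intro j hj
    rw [hK, Finset.mem_Ioc] at hj
    have hnsf := hcon j hj.1
    rw [Nat.squarefree_iff_prime_squarefree] at hnsf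
    push_neg at hnsf
    obtain ⟨p, hp, hpd⟩ := hnsf
    have hp2 : 2 ≤ p := hp.two_le
    have hodd : ¬ (2 ∣ (2*j+3)*(2*j+7)) := by
      intro h
      rcases (Nat.Prime.dvd_mul Nat.prime_two).mp h with h | h <;> omega
    have hpne2 : p ≠ 2 := by
      rintro rfl
      exact hodd (dvd_trans ⟨2, rfl⟩ hpd)
    have hoddp : p % 2 = 1 := hp.eq_two_or_odd.resolve_left hpne2
    have hpdvd : p ∣ (2*j+3)*(2*j+7) := dvd_trans (dvd_mul_right p p) hpd
    have hnotboth : ¬ (p ∣ 2*j+3 ∧ p ∣ 2*j+7) := by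
      rintro ⟨hA, hB⟩
      have h4 : p ∣ 4 := by
        have h := Nat.dvd_sub hB hA
        rwa [show 2*j+7 - (2*j+3) = 4 from by omega] at h
      have hple : p ≤ 4 := Nat.le_of_dvd (by norm_num) h4
      interval_cases p
      · exact hpne2 rfl
      · omega
      · exact absurd hp (by norm_num)
    rcases (Nat.Prime.dvd_mul hp).mp hpdvd with hA | hA
    · have hnotB : ¬ p ∣ 2*j+7 := fun hB => hnotboth ⟨hA, hB⟩
      have hcop : Nat.Coprime (p*p) (2*j+7) :=
        Nat.Coprime.mul ((Nat.Prime.coprime_iff_not_dvd hp).mpr hnotB)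
          ((Nat.Prime.coprime_iff_not_dvd hp).mpr hnotB)
      have hpp : p*p ∣ 2*j+3 := Nat.Coprime.dvd_of_dvd_mul_right hcop hpd
      have hppM : p*p ≤ M := le_trans (Nat.le_of_dvd (by omega) hpp) (by omega)
      have hpR : p ≤ R := by rw [hR]; exact Nat.le_sqrt.mpr hppM
      refine ⟨(p-3)/2, by omega, Or.inl ?_⟩
      rwa [show 2*((p-3)/2)+3 = p from by omega]
    · have hnotB : ¬ p ∣ 2*j+3 := fun hB => hnotboth ⟨hB, hA⟩
      have hcop : Nat.Coprime (p*p) (2*j+3) :=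
        Nat.Coprime.mul ((Nat.Prime.coprime_iff_not_dvd hp).mpr hnotB)
          ((Nat.Prime.coprime_iff_not_dvd hp).mpr hnotB)
      have hpp : p*p ∣ 2*j+7 := by
        have h' : p*p ∣ (2*j+7)*(2*j+3) := by rwa [Nat.mul_comm (2*j+3)] at hpd
        exact Nat.Coprime.dvd_of_dvd_mul_right hcop h'
      have hppM : p*p ≤ M := le_trans (Nat.le_of_dvd (by omega) hpp) (by omega)
      have hpR : p ≤ R := by rw [hR]; exact Nat.le_sqrt.mpr hppM
      refine ⟨(p-3)/2, by omega, Or.inr ?_⟩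
      rwa [show 2*((p-3)/2)+3 = p from by omega]
  -- union bound
  have hsub : K ⊆ (Finset.range R).biUnion
      (fun i => K.filter (fun j => (2*i+3)*(2*i+3) ∣ 2*j+3)
        ∪ K.filter (fun j => (2*i+3)*(2*i+3) ∣ 2*j+7)) := by
    intro j hj
    obtain ⟨i, hiR, hdvd⟩ := hwit j hj
    rw [Finset.mem_biUnion]
    refine ⟨i, Finset.mem_range.mpr hiR, ?_⟩
    rcases hdvd with h | h
    · exact Finset.mem_union_left _ (Finset.mem_filter.mpr ⟨hj, h⟩)
    · exact Finset.mem_union_right _ (Finset.mem_filter.mpr ⟨hj, h⟩)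
  have hcard1 : K.card ≤ ∑ i ∈ Finset.range R,
      ((K.filter (fun j => (2*i+3)*(2*i+3) ∣ 2*j+3)).card
        + (K.filter (fun j => (2*i+3)*(2*i+3) ∣ 2*j+7)).card) :=
    (Finset.card_le_card hsub).trans
      ((Finset.card_biUnion_le).trans (Finset.sum_le_sum fun i _ => Finset.card_union_le _ _))
  -- per-term bound
  have hterm : ∀ i c : ℕ, 0 < c → c ≤ 7 →
      (K.filter (fun j => (2*i+3)*(2*i+3) ∣ 2*j+c)).card
        ≤ (2*T+7)/((2*i+3)*(2*i+3)) + 1 := by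
    intro i c hc hc7
    set Q := (2*i+3)*(2*i+3) with hQ
    have hQ0 : 0 < Q := by positivity
    have hinj : (K.filter (fun j => Q ∣ 2*j+c)).card
        ≤ (Finset.Ioc ((2*N+c)/Q) ((2*N+c+2*T)/Q)).card := by
      apply Finset.card_le_card_of_injOn (fun j => (2*j+c)/Q)
      · intro j hj
        rw [Finset.mem_coe, Finset.mem_filter, hK, Finset.mem_Ioc] at hj
        obtain ⟨⟨hj1, hj2⟩, hdvd⟩ := hj
        rw [Finset.mem_coe, Finset.mem_Ioc]
        constructor
        · by_contra hle
          push_neg at hle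
          have h1 : Q * ((2*j+c)/Q) = 2*j+c := Nat.mul_div_cancel' hdvd
          have h2 : Q * ((2*j+c)/Q) ≤ Q * ((2*N+c)/Q) := Nat.mul_le_mul_left _ hle
          have h3 : Q * ((2*N+c)/Q) ≤ 2*N+c := Nat.mul_div_le _ _
          omega
        · exact Nat.div_le_div_right (by omega)
      · intro a ha b hb hab
        simp only [Finset.coe_filter, Set.mem_setOf_eq] at ha hb
        have h1 : Q * ((2*a+c)/Q) = 2*a+c := Nat.mul_div_cancel' ha.2
        have h2 : Q * ((2*b+c)/Q) = 2*b+c := Nat.mul_div_cancel' hb.2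
        have hab' : (2*a+c)/Q = (2*b+c)/Q := hab
        rw [hab'] at h1
        omega
    rw [Nat.card_Ioc] at hinj
    have h4 := Nat.add_div (a := 2*N+c) (b := 2*T) hQ0
    have h6 : (2*T)/Q ≤ (2*T+7)/Q := Nat.div_le_div_right (by omega)
    revert hinj h4 h6
    generalize (2*N+c+2*T)/Q = d2
    generalize (2*N+c)/Q = d1
    generalize (2*T)/Q = d3
    generalize (2*T+7)/Q = d4
    intro hinj h4 h6
    split_ifs at h4 <;> omega
  have hKcard : K.card = T := by rw [hK, Nat.card_Ioc]; omega
  -- real-number estimate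
  have hreal : (T:ℝ) ≤ 2*(2*(T:ℝ)+7) * (17/72) + 2*R := by
    have hchain : K.card ≤ ∑ i ∈ Finset.range R, (2*((2*T+7)/((2*i+3)*(2*i+3))) + 2) := by
      refine hcard1.trans (Finset.sum_le_sum fun i _ => ?_)
      have t1 := hterm i 3 (by norm_num) (by norm_num)
      have t2 := hterm i 7 (by norm_num) (by norm_num)
      calc _ ≤ ((2*T+7)/((2*i+3)*(2*i+3)) + 1) + ((2*T+7)/((2*i+3)*(2*i+3)) + 1) :=
            Nat.add_le_add t1 t2
        _ = 2*((2*T+7)/((2*i+3)*(2*i+3))) + 2 := by ring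
    rw [hKcard] at hchain
    have hcast : (T:ℝ) ≤ ∑ i ∈ Finset.range R, (2*(((2*T+7)/((2*i+3)*(2*i+3)) : ℕ) : ℝ) + 2) := by
      have := (Nat.cast_le (α := ℝ)).mpr hchain
      push_cast at this
      convert this using 2 <;> push_cast <;> ring
    have hbound : ∑ i ∈ Finset.range R, (2*(((2*T+7)/((2*i+3)*(2*i+3)) : ℕ) : ℝ) + 2)
        ≤ ∑ i ∈ Finset.range R, (2*(2*(T:ℝ)+7) * ((1:ℝ)/(2*(i:ℝ)+3)^2) + 2) := by
      refine Finset.sum_le_sum fun i _ => ?_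
      have hdle : (((2*T+7)/((2*i+3)*(2*i+3)) : ℕ) : ℝ) ≤ ((2*T+7 : ℕ) : ℝ)/(((2*i+3)*(2*i+3) : ℕ) : ℝ) :=
        Nat.cast_div_le
      have heq : ((2*T+7 : ℕ) : ℝ)/(((2*i+3)*(2*i+3) : ℕ) : ℝ) = (2*(T:ℝ)+7) * ((1:ℝ)/(2*(i:ℝ)+3)^2) := by
        have d1 : ((2*T+7 : ℕ) : ℝ) = 2*(T:ℝ)+7 := by push_cast; ring
        have d2 : (((2*i+3)*(2*i+3) : ℕ) : ℝ) = (2*(i:ℝ)+3)^2 := by push_cast; ring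
        rw [d1, d2, mul_one_div]
      rw [heq] at hdle
      nlinarith [hdle]
    have hsum2 : ∑ i ∈ Finset.range R, (2*(2*(T:ℝ)+7) * ((1:ℝ)/(2*(i:ℝ)+3)^2) + 2)
        = 2*(2*(T:ℝ)+7) * (∑ i ∈ Finset.range R, (1:ℝ)/(2*(i:ℝ)+3)^2) + 2*R := by
      rw [Finset.sum_add_distrib, ← Finset.mul_sum, Finset.sum_const, Finset.card_range]
      push_cast
      ring
    have hsb := my_sum_bound R
    have h37 : (0:ℝ) ≤ 2*(2*(T:ℝ)+7) := by positivity
    calc (T:ℝ) ≤ _ := hcast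
      _ ≤ _ := hbound
      _ = _ := hsum2
      _ ≤ 2*(2*(T:ℝ)+7) * (17/72) + 2*R := by nlinarith [hsb, h37]
  -- conclude
  have h2T : 2*T ≤ 119 + 72*R := by
    have h1 : (2*(T:ℝ)) ≤ 119 + 72*(R:ℝ) := by linarith [hreal]
    have h2 : ((2*T : ℕ) : ℝ) ≤ ((119 + 72*R : ℕ) : ℝ) := by push_cast; linarith
    exact_mod_cast h2
  have hRM : R*R ≤ M := by
    have h := Nat.sqrt_le' M
    rw [hR]
    calc Nat.sqrt M * Nat.sqrt M = (Nat.sqrt M)^2 := (sq (Nat.sqrt M)).symm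
      _ ≤ M := h
  have hR217 : R ≤ 217 := by
    by_contra hgt
    push_neg at hgt
    nlinarith [hRM, h2T]
  omega

/-- infinitely many squarefree `D ≡ 1 (mod 4)` admit a principal ideal
`(x + yω)` of `O_F = ℤ[ω]`, `ω = (1+√D)/2`, whose canonical-embedding lattice
(`ℤ`-spanned by `σ(α)` and `σ(αω)`) is well-rounded. -/
theorem stmt_6 :
    {D : ℕ | Squarefree D ∧ 1 < D ∧ D % 4 = 1 ∧
      ∃ x y : ℤ, ¬(x = 0 ∧ y = 0) ∧
        IsWellRounded (Submodule.span ℤ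
          {embQ D ((x : ℝ) + y / 2) (y / 2),
           embQ D ((y : ℝ) * (D - 1) / 4 + (x + y) / 2) (((x : ℝ) + y) / 2)})}.Infinite := by
  apply Set.infinite_of_not_bddAbove
  rintro ⟨a, ha⟩
  obtain ⟨j, hja, hsf⟩ := my_sieve a
  have hfact : (2*j+3)*(2*j+7) = 4*(j*j+5*j+5)+1 := by ring
  have hmem : (2*j+3)*(2*j+7) ∈ {D : ℕ | Squarefree D ∧ 1 < D ∧ D % 4 = 1 ∧
      ∃ x y : ℤ, ¬(x = 0 ∧ y = 0) ∧
        IsWellRounded (Submodule.span ℤ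
          {embQ D ((x : ℝ) + y / 2) (y / 2),
           embQ D ((y : ℝ) * (D - 1) / 4 + (x + y) / 2) (((x : ℝ) + y) / 2)})} := by
    refine ⟨hsf, by rw [hfact]; omega, by rw [hfact]; omega, ?_⟩
    exact my_key j
  have hle := ha hmem
  rw [hfact] at hle
  omega
end
end

section
/- In the real quadratic field ℚ(√3), the principal ideal of ℤ[√3] generated by 3 + √3 maps under the canonical embedding to a well-rounded lattice in ℝ², and this ideal has norm 6. -/
noncomputable section

open scoped BigOperators

/- ---------- auxiliary material ---------- -/

lemma r3_sq : Real.sqrt 3 ^ 2 = 3 := Real.sq_sqrt (by norm_num)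
lemma r3_pos : 0 < Real.sqrt 3 := Real.sqrt_pos.mpr (by norm_num)

/-- The lattice of the ideal `(3+√3)`. -/
def IdL : Submodule ℤ (Fin 2 → ℝ) :=
  Submodule.span ℤ ({embQ 3 3 1, embQ 3 3 3} : Set (Fin 2 → ℝ))

lemma sqnorm_combo (m n : ℤ) :
    sqnorm (m • embQ 3 3 1 + n • embQ 3 3 3)
      = 6 * (3 * ((m:ℝ) + n) ^ 2 + ((m:ℝ) + 3 * n) ^ 2) := by
  simp [sqnorm, Fin.sum_univ_two, embQ, Pi.add_apply, Pi.smul_apply, zsmul_eq_mul]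
  linear_combination (2 * ((m:ℝ) + 3 * n) ^ 2) * r3_sq

lemma one_le_sq {z : ℤ} (hz : z ≠ 0) : 1 ≤ z ^ 2 := by
  have h := Int.one_le_abs hz
  calc (1:ℤ) = 1 * 1 := by ring
    _ ≤ |z| * |z| := mul_le_mul h h (by norm_num) (abs_nonneg z)
    _ = z ^ 2 := by rw [abs_mul_abs_self]; ring

lemma key_int (s t : ℤ) (h2 : 2 ∣ t - s) (h : ¬(s = 0 ∧ t = 0)) :
    4 ≤ 3 * s ^ 2 + t ^ 2 := by
  obtain ⟨u, hu⟩ := h2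
  rcases eq_or_ne s 0 with hs | hs
  · subst hs
    have ht : t ≠ 0 := by tauto
    have hu0 : u ≠ 0 := by omega
    have htu : t = 2 * u := by omega
    have h1 : 1 ≤ u ^ 2 := one_le_sq hu0
    subst htu
    nlinarith
  · have hs2 : 1 ≤ s ^ 2 := one_le_sq hs
    rcases eq_or_ne t 0 with ht | ht
    · subst ht
      have hu0 : u ≠ 0 := by omega
      have hsu : s = 2 * (-u) := by omega
      have h1 : 1 ≤ u ^ 2 := one_le_sq hu0
      subst hsu
      nlinarith
    · have ht2 : 1 ≤ t ^ 2 := one_le_sq ht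
      nlinarith

lemma sqnorm_lower (x : Fin 2 → ℝ) (hx : x ∈ IdL) (hx0 : x ≠ 0) : 24 ≤ sqnorm x := by
  obtain ⟨m, n, hmn⟩ := Submodule.mem_span_pair.mp hx
  have hmn0 : ¬(m = 0 ∧ n = 0) := by
    rintro ⟨rfl, rfl⟩
    apply hx0
    rw [← hmn]; simp
  have hkey : (4:ℤ) ≤ 3 * (m + n) ^ 2 + (m + 3 * n) ^ 2 :=
    key_int (m + n) (m + 3 * n) ⟨n, by ring⟩ (by omega)
  have hkeyR : (4:ℝ) ≤ 3 * ((m:ℝ) + n) ^ 2 + ((m:ℝ) + 3 * n) ^ 2 := by exact_mod_cast hkey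
  rw [← hmn, sqnorm_combo]
  linarith

lemma sqnorm_v1 : sqnorm (embQ 3 3 1) = 24 := by
  simp [sqnorm, Fin.sum_univ_two, embQ]
  linear_combination (2:ℝ) * r3_sq

lemma v1_ne_zero : embQ 3 3 1 ≠ 0 := by
  intro h
  have := congrFun h 0
  simp [embQ] at this
  nlinarith [r3_pos]

lemma w_eq : embQ 3 3 1 - embQ 3 3 3 = embQ 3 0 (-2) := by
  funext i
  fin_cases i <;> simp [embQ] <;> ring

lemma sqnorm_w : sqnorm (embQ 3 0 (-2)) = 24 := by
  simp [sqnorm, Fin.sum_univ_two, embQ]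
  linear_combination (8:ℝ) * r3_sq

lemma w_ne_zero : embQ 3 0 (-2) ≠ 0 := by
  intro h
  have h0 := congrFun h 0
  have hr := r3_pos
  simp only [embQ, Matrix.cons_val_zero, Pi.zero_apply] at h0
  nlinarith

lemma lambda1_IdL : lambda1 IdL = 24 := by
  unfold lambda1
  apply IsLeast.csInf_eq
  constructor
  · exact ⟨embQ 3 3 1, Submodule.subset_span (Or.inl rfl), v1_ne_zero, sqnorm_v1⟩
  · rintro r ⟨x, hx, hx0, rfl⟩
    exact sqnorm_lower x hx hx0

lemma v1_mem : embQ 3 3 1 ∈ IdL := Submodule.subset_span (Or.inl rfl)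
lemma v2_mem : embQ 3 3 3 ∈ IdL := Submodule.subset_span (Or.inr rfl)
lemma w_mem : embQ 3 0 (-2) ∈ IdL := w_eq ▸ sub_mem v1_mem v2_mem

lemma wellRounded_IdL : IsWellRounded IdL := by
  refine ⟨![embQ 3 3 1, embQ 3 0 (-2)], ?_, ?_⟩
  · intro i
    fin_cases i
    · exact ⟨v1_mem, v1_ne_zero, by rw [lambda1_IdL]; exact sqnorm_v1⟩
    · exact ⟨w_mem, w_ne_zero, by rw [lambda1_IdL]; exact sqnorm_w⟩
  · rw [linearIndependent_fin2]
    refine ⟨by simpa using w_ne_zero, ?_⟩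
    intro a h
    have h0 := congrFun h 0
    have h1 := congrFun h 1
    simp [embQ] at h0 h1
    nlinarith [h0, h1]

/- ---------- index part ---------- -/

def OFL : Submodule ℤ (Fin 2 → ℝ) :=
  Submodule.span ℤ ({embQ 3 1 0, embQ 3 0 1} : Set (Fin 2 → ℝ))

def Gmap : ℤ × ℤ →+ (Fin 2 → ℝ) where
  toFun p := p.1 • embQ 3 1 0 + p.2 • embQ 3 0 1
  map_zero' := by simp
  map_add' p q := by
    funext i
    simp [Pi.add_apply, Pi.smul_apply, zsmul_eq_mul]
    push_cast
    ring

lemma Gmap_mem (p : ℤ × ℤ) : Gmap p ∈ OFL :=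
  Submodule.mem_span_pair.mpr ⟨p.1, p.2, rfl⟩

lemma Gmap_inj : Function.Injective Gmap := by
  rw [injective_iff_map_eq_zero]
  intro p h
  have h0 := congrFun h 0
  have h1 := congrFun h 1
  simp [Gmap, embQ, Pi.add_apply, Pi.smul_apply, zsmul_eq_mul] at h0 h1
  have hp1 : (p.1 : ℝ) = 0 := by linarith
  have hp2 : (p.2 : ℝ) * Real.sqrt 3 = 0 := by linarith
  have hp2' : (p.2 : ℝ) = 0 := by
    rcases mul_eq_zero.mp hp2 with h' | h'
    · exact h'
    · exact absurd h' (ne_of_gt r3_pos)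
  have e1 : p.1 = 0 := by exact_mod_cast hp1
  have e2 : p.2 = 0 := by exact_mod_cast hp2'
  exact Prod.ext e1 e2

lemma Gmap_surj_onto : ∀ x ∈ OFL, ∃ p : ℤ × ℤ, Gmap p = x := by
  intro x hx
  obtain ⟨a, b, hab⟩ := Submodule.mem_span_pair.mp hx
  exact ⟨(a, b), hab⟩

/-- membership of `Gmap (a,b)` in `Lat` is governed by `6 ∣ a + 3b` -/
lemma Gmap_mem_IdL_iff (a b : ℤ) : Gmap (a, b) ∈ IdL ↔ (6:ℤ) ∣ a + 3 * b := by
  constructor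
  · intro h
    obtain ⟨m, n, hmn⟩ := Submodule.mem_span_pair.mp h
    have h0 := congrFun hmn 0
    have h1 := congrFun hmn 1
    simp [Gmap, embQ, Pi.add_apply, Pi.smul_apply, zsmul_eq_mul] at h0 h1
    have hA : (3 * m + 3 * n : ℝ) = a := by push_cast at h0 h1 ⊢; linarith
    have hB : ((m : ℝ) + 3 * n - b) * Real.sqrt 3 = 0 := by push_cast at h0 h1 ⊢; nlinarith [h0, h1]
    have hB' : (m : ℝ) + 3 * n = b := by
      rcases mul_eq_zero.mp hB with h' | h'
      · linarith
      · exact absurd h' (ne_of_gt r3_pos)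
    have ha : 3 * m + 3 * n = a := by exact_mod_cast hA
    have hb : m + 3 * n = b := by exact_mod_cast hB'
    exact ⟨m + 2 * n, by omega⟩
  · rintro ⟨k, hk⟩
    apply Submodule.mem_span_pair.mpr
    refine ⟨3 * k - 2 * b, b - k, ?_⟩
    have ha : (a : ℝ) = 6 * k - 3 * b := by exact_mod_cast (by omega : a = 6 * k - 3 * b)
    funext i
    fin_cases i <;>
      · simp [Gmap, embQ, Pi.add_apply, Pi.smul_apply, zsmul_eq_mul]
        push_cast
        rw [ha]
        ring

def psi : ℤ × ℤ →+ ZMod 6 where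
  toFun p := (p.1 : ZMod 6) + 3 * (p.2 : ZMod 6)
  map_zero' := by simp
  map_add' p q := by
    simp only [Prod.fst_add, Prod.snd_add]
    push_cast
    ring

lemma psi_surj : Function.Surjective psi := by
  intro c
  refine ⟨((c.val : ℤ), 0), ?_⟩
  simp [psi, ZMod.natCast_val]

lemma psi_eq_zero_iff (p : ℤ × ℤ) : psi p = 0 ↔ (6:ℤ) ∣ p.1 + 3 * p.2 := by
  have hcast : psi p = ((p.1 + 3 * p.2 : ℤ) : ZMod 6) := by
    simp only [psi, AddMonoidHom.coe_mk, ZeroHom.coe_mk]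
    push_cast
    ring
  rw [hcast, ZMod.intCast_zmod_eq_zero_iff_dvd]
  norm_num

/-- in `ℚ(√3)`, the principal ideal `(3 + √3)` of `ℤ[√3]` gives a
well-rounded canonical-embedding lattice (spanned by `σ(3+√3)` and `σ((3+√3)√3)`),
and its norm, i.e. the index of this lattice in `σ(ℤ[√3])`, is `6`. -/
theorem stmt_7 :
    IsWellRounded (Submodule.span ℤ ({embQ 3 3 1, embQ 3 3 3} : Set (Fin 2 → ℝ))) ∧
    AddSubgroup.relIndex
      (Submodule.span ℤ ({embQ 3 3 1, embQ 3 3 3} : Set (Fin 2 → ℝ))).toAddSubgroup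
      (Submodule.span ℤ ({embQ 3 1 0, embQ 3 0 1} : Set (Fin 2 → ℝ))).toAddSubgroup = 6 := by
  constructor
  · exact wellRounded_IdL
  · -- index part
    set L' := (IdL).toAddSubgroup with hL'
    set M' := (OFL).toAddSubgroup with hM'
    show AddSubgroup.relIndex L' M' = 6
    -- build the equivalence ℤ × ℤ ≃+ M'
    have hmem : ∀ p : ℤ × ℤ, Gmap p ∈ M' := fun p => Gmap_mem p
    let f : ℤ × ℤ →+ M' := Gmap.codRestrict M' hmem
    have hfbij : Function.Bijective f := by
      constructor
      · intro p q h
        apply Gmap_inj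
        exact congrArg Subtype.val h
      · rintro ⟨x, hx⟩
        obtain ⟨p, hp⟩ := Gmap_surj_onto x hx
        exact ⟨p, Subtype.ext hp⟩
    have hfs : Function.Surjective ⇑f := hfbij.2
    have hrel : AddSubgroup.relIndex L' M' = (L'.addSubgroupOf M').index := rfl
    rw [hrel, ← AddSubgroup.index_comap_of_surjective _ hfs]
    have hker : (L'.addSubgroupOf M').comap f = psi.ker := by
      ext p
      simp only [AddSubgroup.mem_comap, AddSubgroup.mem_addSubgroupOf, AddMonoidHom.mem_ker]
      have hGL : ((f p : M') : Fin 2 → ℝ) = Gmap p := rfl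
      rw [hGL]
      have hmemiff : Gmap p ∈ IdL ↔ (6:ℤ) ∣ p.1 + 3 * p.2 := by
        have := Gmap_mem_IdL_iff p.1 p.2
        rwa [show ((p.1, p.2) : ℤ × ℤ) = p from rfl] at this
      constructor
      · intro h
        exact (psi_eq_zero_iff p).mpr (hmemiff.mp h)
      · intro h
        exact hmemiff.mpr ((psi_eq_zero_iff p).mp h)
    rw [hker, AddSubgroup.index_ker]
    have : psi.range = ⊤ := AddMonoidHom.range_eq_top.mpr psi_surj
    rw [this]
    rw [Nat.card_congr AddSubgroup.topEquiv.toEquiv, Nat.card_zmod]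
end
end

section
/- In the real quadratic field ℚ(√15), the principal ideal of ℤ[√15] generated by 5 + √15 maps under the canonical embedding to a well-rounded lattice in ℝ², and this ideal has norm 10. -/
noncomputable section

open scoped BigOperators

namespace Stmt8Aux

lemma hs : Real.sqrt 15 ^ 2 = 15 := Real.sq_sqrt (by norm_num)

lemma quad_ge (m n : ℤ) (h : ¬(m = 0 ∧ n = 0)) :
    (80 : ℤ) ≤ 80*m^2 + 600*m*n + 1200*n^2 := by
  by_cases hn : n = 0
  · subst hn
    have hm : m ≠ 0 := by tauto
    have hm1 : 1 ≤ m^2 := by rcases lt_or_gt_of_ne hm with h|h <;> nlinarith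
    nlinarith
  · by_cases h4 : 4*m + 15*n = 0
    · have hdvd : (4:ℤ) ∣ n := by omega
      obtain ⟨k, rfl⟩ := hdvd
      have hk : k ≠ 0 := by simpa using hn
      have hk1 : 1 ≤ k^2 := by rcases lt_or_gt_of_ne hk with h|h <;> nlinarith
      nlinarith [sq_nonneg (4*m+15*(4*k))]
    · have h1 : 1 ≤ (4*m+15*n)^2 := by rcases lt_or_gt_of_ne h4 with h|h <;> nlinarith
      have hn1 : 1 ≤ n^2 := by rcases lt_or_gt_of_ne hn with h|h <;> nlinarith
      nlinarith

lemma sqnorm_comb (m n : ℤ) :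
    sqnorm (m • embQ 15 5 1 + n • embQ 15 15 5) =
      ((80*m^2 + 600*m*n + 1200*n^2 : ℤ) : ℝ) := by
  simp only [sqnorm, Fin.sum_univ_two, embQ, Pi.add_apply, Pi.smul_apply,
    zsmul_eq_mul, Pi.mul_apply, Pi.intCast_apply,
    Matrix.cons_val_zero, Matrix.cons_val_one, Matrix.head_cons]
  push_cast
  linear_combination (2*((m:ℝ)+5*n)^2) * hs

lemma w_eq : (-4 : ℤ) • embQ 15 5 1 + (1:ℤ) • embQ 15 15 5 = embQ 15 (-5) 1 := by
  funext i
  fin_cases i <;> simp [embQ] <;> ring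

lemma sqrt15_pos : 0 < Real.sqrt 15 := Real.sqrt_pos.mpr (by norm_num)

lemma v1_ne : embQ 15 5 1 ≠ 0 := by
  intro h
  have h0 := congrFun h 0
  simp [embQ] at h0
  nlinarith [sqrt15_pos]

lemma w_ne : embQ 15 (-5) 1 ≠ 0 := by
  intro h
  have h0 := congrFun h 1
  simp [embQ] at h0
  nlinarith [sqrt15_pos]

lemma lambda1_eq :
    lambda1 (Submodule.span ℤ ({embQ 15 5 1, embQ 15 15 5} : Set (Fin 2 → ℝ))) = 80 := by
  apply IsLeast.csInf_eq
  constructor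
  · refine ⟨embQ 15 5 1, Submodule.subset_span (by simp), v1_ne, ?_⟩
    have h := sqnorm_comb 1 0
    simpa using h
  · rintro r ⟨x, hx, hx0, rfl⟩
    rw [Submodule.mem_span_pair] at hx
    obtain ⟨m, n, rfl⟩ := hx
    have hmn : ¬(m = 0 ∧ n = 0) := by
      rintro ⟨rfl, rfl⟩
      simp at hx0
    rw [sqnorm_comb]
    exact_mod_cast quad_ge m n hmn

lemma minv1 : IsMinVec (Submodule.span ℤ ({embQ 15 5 1, embQ 15 15 5} : Set (Fin 2 → ℝ)))
    (embQ 15 5 1) := by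
  refine ⟨Submodule.subset_span (by simp), v1_ne, ?_⟩
  rw [lambda1_eq]
  have h := sqnorm_comb 1 0
  simpa using h

lemma minw : IsMinVec (Submodule.span ℤ ({embQ 15 5 1, embQ 15 15 5} : Set (Fin 2 → ℝ)))
    (embQ 15 (-5) 1) := by
  refine ⟨?_, w_ne, ?_⟩
  · rw [Submodule.mem_span_pair]
    exact ⟨-4, 1, w_eq⟩
  · rw [lambda1_eq]
    have h := sqnorm_comb (-4) 1
    rw [w_eq] at h
    rw [h]
    norm_num

lemma linindep : LinearIndependent ℝ ![embQ 15 5 1, embQ 15 (-5) 1] := by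
  rw [linearIndependent_fin2]
  refine ⟨by simpa using w_ne, ?_⟩
  intro a h
  have h0 := congrFun h 0
  have h1 := congrFun h 1
  simp [embQ] at h0 h1
  have ha : a = -1 := by linarith
  subst ha
  have hz : Real.sqrt 15 = 0 := by linarith
  have := hs
  rw [hz] at this
  norm_num at this

def f : ℤ × ℤ →+ (Fin 2 → ℝ) :=
  AddMonoidHom.mk' (fun p => p.1 • embQ 15 1 0 + p.2 • embQ 15 0 1) (by
    intro p q
    simp only [Prod.fst_add, Prod.snd_add, add_smul]
    abel)

def φ : ℤ × ℤ →+ ZMod 10 :=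
  AddMonoidHom.mk' (fun p => ((p.1 + 5 * p.2 : ℤ) : ZMod 10)) (by
    intro p q
    simp only [Prod.fst_add, Prod.snd_add]
    push_cast
    ring)

lemma range_f : f.range =
    (Submodule.span ℤ ({embQ 15 1 0, embQ 15 0 1} : Set (Fin 2 → ℝ))).toAddSubgroup := by
  ext x
  simp only [AddMonoidHom.mem_range, Submodule.mem_toAddSubgroup, Submodule.mem_span_pair]
  constructor
  · rintro ⟨⟨a, b⟩, rfl⟩
    exact ⟨a, b, rfl⟩
  · rintro ⟨a, b, h⟩
    exact ⟨(a, b), h⟩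

lemma comap_f :
    (Submodule.span ℤ ({embQ 15 5 1, embQ 15 15 5} : Set (Fin 2 → ℝ))).toAddSubgroup.comap f
      = φ.ker := by
  ext ⟨a, b⟩
  simp only [AddSubgroup.mem_comap, Submodule.mem_toAddSubgroup, AddMonoidHom.mem_ker,
    Submodule.mem_span_pair]
  have hfa : f (a, b) = a • embQ 15 1 0 + b • embQ 15 0 1 := rfl
  have hφ : φ (a, b) = ((a + 5 * b : ℤ) : ZMod 10) := rfl
  have hker : (((a + 5 * b : ℤ)) : ZMod 10) = 0 ↔ (10 : ℤ) ∣ (a + 5 * b) := by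
    exact_mod_cast ZMod.intCast_zmod_eq_zero_iff_dvd _ 10
  rw [hfa, hφ, hker]
  constructor
  · rintro ⟨m, n, h⟩
    have h0 := congrFun h 0
    have h1 := congrFun h 1
    simp only [embQ, Pi.add_apply, Pi.smul_apply, zsmul_eq_mul, Pi.mul_apply,
      Pi.intCast_apply, Matrix.cons_val_zero, Matrix.cons_val_one, Matrix.head_cons] at h0 h1
    have ha : (a : ℝ) = 5 * m + 15 * n := by linear_combination -(h0 + h1) / 2
    have hb0 : Real.sqrt 15 * ((m : ℝ) + 5 * n - b) = 0 := by
      linear_combination (h0 - h1) / 2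
    have hb : (b : ℝ) = (m : ℝ) + 5 * n := by
      rcases mul_eq_zero.mp hb0 with h' | h'
      · exact absurd h' sqrt15_pos.ne'
      · linarith
    have haZ : a = 5 * m + 15 * n := by exact_mod_cast ha
    have hbZ : b = m + 5 * n := by exact_mod_cast hb
    omega
  · intro hd
    obtain ⟨k, hk⟩ := hd
    refine ⟨(a - 3 * b) / 2, (5 * b - a) / 10, ?_⟩
    have hm : 5 * ((a - 3 * b) / 2) + 15 * ((5 * b - a) / 10) = a := by omega
    have hn : ((a - 3 * b) / 2) + 5 * ((5 * b - a) / 10) = b := by omega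
    have hmR : 5 * (((a - 3 * b) / 2 : ℤ) : ℝ) + 15 * (((5 * b - a) / 10 : ℤ) : ℝ) = a := by
      exact_mod_cast congrArg (Int.cast : ℤ → ℝ) hm
    have hnR : (((a - 3 * b) / 2 : ℤ) : ℝ) + 5 * (((5 * b - a) / 10 : ℤ) : ℝ) = b := by
      exact_mod_cast congrArg (Int.cast : ℤ → ℝ) hn
    funext i
    fin_cases i <;> simp only [embQ, Pi.add_apply, Pi.smul_apply, zsmul_eq_mul,
      Pi.mul_apply, Pi.intCast_apply, Fin.isValue, Matrix.cons_val_zero,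
      Matrix.cons_val_one, Matrix.head_cons] <;> simp [embQ]
    · linear_combination hmR + Real.sqrt 15 * hnR
    · linear_combination hmR - Real.sqrt 15 * hnR

lemma phi_surj : Function.Surjective φ := by
  intro z
  obtain ⟨x, rfl⟩ := ZMod.intCast_surjective z
  refine ⟨(x, 0), ?_⟩
  show ((x + 5 * 0 : ℤ) : ZMod 10) = (x : ZMod 10)
  push_cast
  ring

lemma ker_index : φ.ker.index = 10 := by
  rw [AddSubgroup.index_ker]
  have hr : φ.range = ⊤ := AddMonoidHom.range_eq_top.mpr phi_surj
  rw [hr]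
  rw [Nat.card_congr AddSubgroup.topEquiv.toEquiv, Nat.card_eq_fintype_card]
  exact ZMod.card 10

end Stmt8Aux


/-- in `ℚ(√15)`, the principal ideal `(5 + √15)` of `ℤ[√15]` gives a
well-rounded canonical-embedding lattice (spanned by `σ(5+√15)` and `σ((5+√15)√15)`),
and its norm, i.e. the index of this lattice in `σ(ℤ[√15])`, is `10`. -/
theorem stmt_8 :
    IsWellRounded (Submodule.span ℤ ({embQ 15 5 1, embQ 15 15 5} : Set (Fin 2 → ℝ))) ∧
    AddSubgroup.relIndex
      (Submodule.span ℤ ({embQ 15 5 1, embQ 15 15 5} : Set (Fin 2 → ℝ))).toAddSubgroup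
      (Submodule.span ℤ ({embQ 15 1 0, embQ 15 0 1} : Set (Fin 2 → ℝ))).toAddSubgroup = 10 := by
  constructor
  · exact ⟨![embQ 15 5 1, embQ 15 (-5) 1], by
      intro i; fin_cases i
      · simpa using Stmt8Aux.minv1
      · simpa using Stmt8Aux.minw, Stmt8Aux.linindep⟩
  · have h := AddSubgroup.index_comap
      (Submodule.span ℤ ({embQ 15 5 1, embQ 15 15 5} : Set (Fin 2 → ℝ))).toAddSubgroup
      Stmt8Aux.f
    rw [Stmt8Aux.range_f] at h
    rw [← h, Stmt8Aux.comap_f, Stmt8Aux.ker_index]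
end
end

section
/- For every odd integer m ≥ 3 with D = m² − 2m squarefree and D ≡ 3 (mod 4), the lattice obtained from the principal ideal (m + √D) of ℤ[√D] under the canonical embedding is well-rounded. -/
noncomputable section

open scoped BigOperators

lemma key_int_s10 (m a b : ℤ) (hm : 3 ≤ m) (hab : ¬(a = 0 ∧ b = 0)) :
    4*m^2 - 4*m ≤ 2*m^2*(a + b*(m-2))^2 + 2*(m^2-2*m)*(a + b*m)^2 := by
  have hD0 : (0:ℤ) ≤ m^2 - 2*m := by nlinarith
  have hrel : (a + b*m) = (a + b*(m-2)) + 2*b := by ring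
  by_cases h1 : a + b*(m-2) = 0
  · by_cases h2 : a + b*m = 0
    · exfalso
      have hb : b = 0 := by linarith
      subst hb
      simp at h1
      exact hab ⟨h1, rfl⟩
    · have hb : b ≠ 0 := by
        intro h; subst h; simp at h1 h2 ⊢; exact h2 h1
      have hb2 : 1 ≤ b^2 := by rcases hb.lt_or_gt with h|h <;> nlinarith
      have hB : (a + b*m)^2 = 4*b^2 := by rw [hrel, h1]; ring
      rw [h1, hB]
      nlinarith [mul_nonneg (by linarith : (0:ℤ) ≤ m - 3) (by linarith : (0:ℤ) ≤ m), hb2]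
  · by_cases h2 : a + b*m = 0
    · have hb : b ≠ 0 := by
        intro h; subst h; simp at h1 h2 ⊢; exact h1 h2
      have hb2 : 1 ≤ b^2 := by rcases hb.lt_or_gt with h|h <;> nlinarith
      have hC : (a + b*(m-2))^2 = 4*b^2 := by
        have : a + b*(m-2) = -2*b := by linarith
        rw [this]; ring
      rw [h2, hC]
      nlinarith [hb2, sq_nonneg m]
    · have hc2 : 1 ≤ (a + b*(m-2))^2 := by
        rcases lt_or_gt_of_ne h1 with h|h <;> nlinarith
      have hB2 : 1 ≤ (a + b*m)^2 := by
        rcases lt_or_gt_of_ne h2 with h|h <;> nlinarith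
      nlinarith [mul_le_mul_of_nonneg_left hc2 (by positivity : (0:ℤ) ≤ 2*m^2),
        mul_le_mul_of_nonneg_left hB2 (by linarith : (0:ℤ) ≤ 2*(m^2-2*m))]

lemma sqnorm_embQ (d A B : ℝ) (hd : 0 ≤ d) :
    sqnorm (embQ d A B) = 2*A^2 + 2*d*B^2 := by
  have h : Real.sqrt d ^ 2 = d := Real.sq_sqrt hd
  simp only [sqnorm, embQ, Fin.sum_univ_two, Matrix.cons_val_zero, Matrix.cons_val_one,
    Matrix.head_cons]
  linear_combination (2*B^2) * h

lemma smul_embQ (d : ℝ) (a b : ℤ) (A B A' B' : ℝ) :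
    a • embQ d A B + b • embQ d A' B' = embQ d (a*A + b*A') (a*B + b*B') := by
  funext i
  fin_cases i <;>
    simp [embQ, Pi.smul_apply, zsmul_eq_mul] <;> ring

/-- for every odd integer `m ≥ 3` with `D = m² − 2m` squarefree and
`D ≡ 3 (mod 4)`, the canonical-embedding lattice of the principal ideal `(m + √D)` of
`ℤ[√D]` (spanned by `σ(m + √D)` and `σ((m + √D)√D) = σ(D + m√D)`) is well-rounded. -/
theorem stmt_10 (m : ℤ) (hodd : Odd m) (hm : 3 ≤ m)
    (D : ℤ) (hD : D = m ^ 2 - 2 * m) (hsf : Squarefree D) (hmod : D % 4 = 3) :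
    IsWellRounded (Submodule.span ℤ
      ({embQ D m 1, embQ D D m} : Set (Fin 2 → ℝ))) := by
  have hmr : (3:ℝ) ≤ (m:ℝ) := by exact_mod_cast hm
  have hDpos : (0:ℤ) < D := by rw [hD]; nlinarith
  have hDr : (0:ℝ) ≤ (D:ℝ) := by exact_mod_cast hDpos.le
  have hs_pos : 0 < Real.sqrt (D:ℝ) := Real.sqrt_pos.2 (by exact_mod_cast hDpos)
  set L := Submodule.span ℤ ({embQ D m 1, embQ D D m} : Set (Fin 2 → ℝ)) with hL
  set M : ℝ := 4*(m:ℝ)^2 - 4*(m:ℝ) with hM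
  -- lower bound for the squared norm of every nonzero lattice vector
  have lb : ∀ x ∈ L, x ≠ 0 → M ≤ sqnorm x := by
    intro x hx hx0
    rw [hL, Submodule.mem_span_pair] at hx
    obtain ⟨a, b, hab⟩ := hx
    have hx' : x = embQ D ((m:ℝ)*((a:ℝ) + b*((m:ℝ)-2))) ((a:ℝ) + b*(m:ℝ)) := by
      have eA : (a:ℝ)*(m:ℝ) + (b:ℝ)*(D:ℝ) = (m:ℝ)*((a:ℝ)+(b:ℝ)*((m:ℝ)-2)) := by
        push_cast [hD]; ring
      have eB : (a:ℝ)*1 + (b:ℝ)*(m:ℝ) = (a:ℝ)+(b:ℝ)*(m:ℝ) := by ring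
      rw [← hab, smul_embQ, eA, eB]
    have hab0 : ¬(a = 0 ∧ b = 0) := by
      rintro ⟨rfl, rfl⟩
      apply hx0
      rw [← hab]
      simp
    have e1 : sqnorm x
        = ((2*m^2*(a + b*(m-2))^2 + 2*(m^2-2*m)*(a + b*m)^2 : ℤ) : ℝ) := by
      rw [hx', sqnorm_embQ _ _ _ hDr]
      push_cast [hD]
      ring
    rw [e1, hM]
    have key := key_int_s10 m a b hm hab0
    exact_mod_cast key
  -- the two candidate minimal vectors
  have hv1 : embQ D m 1 ∈ L := Submodule.subset_span (by left; rfl)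
  have hv1n : sqnorm (embQ D m 1) = M := by
    rw [sqnorm_embQ _ _ _ hDr, hM]
    push_cast [hD]; ring
  have hv1ne : embQ D m 1 ≠ 0 := by
    intro h
    have h0 : (m:ℝ) + 1 * Real.sqrt (D:ℝ) = 0 := by
      simpa [embQ] using congrFun h 0
    nlinarith
  have hw : embQ D (-(m:ℝ)) 1 ∈ L := by
    rw [hL, Submodule.mem_span_pair]
    refine ⟨1 - m, 1, ?_⟩
    have eA : ((1-m : ℤ):ℝ)*(m:ℝ) + ((1:ℤ):ℝ)*(D:ℝ) = -(m:ℝ) := by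
      push_cast [hD]; ring
    have eB : ((1-m : ℤ):ℝ)*1 + ((1:ℤ):ℝ)*(m:ℝ) = (1:ℝ) := by push_cast; ring
    rw [smul_embQ, eA, eB]
  have hwn : sqnorm (embQ D (-(m:ℝ)) 1) = M := by
    rw [sqnorm_embQ _ _ _ hDr, hM]
    push_cast [hD]; ring
  have hwne : embQ D (-(m:ℝ)) 1 ≠ 0 := by
    intro h
    have h1 : -(m:ℝ) - 1 * Real.sqrt (D:ℝ) = 0 := by
      simpa [embQ] using congrFun h 1
    nlinarith
  -- λ₁ of the lattice
  have hlam : lambda1 L = M := by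
    unfold lambda1
    have hlb : ∀ r ∈ {r : ℝ | ∃ x ∈ L, x ≠ 0 ∧ sqnorm x = r}, M ≤ r := by
      rintro r ⟨x, hx, hx0, rfl⟩
      exact lb x hx hx0
    have hmem : M ∈ {r : ℝ | ∃ x ∈ L, x ≠ 0 ∧ sqnorm x = r} :=
      ⟨embQ D m 1, hv1, hv1ne, hv1n⟩
    exact le_antisymm (csInf_le ⟨M, hlb⟩ hmem) (le_csInf ⟨M, hmem⟩ hlb)
  -- assemble
  refine ⟨![embQ D m 1, embQ D (-(m:ℝ)) 1], ?_, ?_⟩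
  · intro i
    fin_cases i
    · exact ⟨hv1, hv1ne, hv1n.trans hlam.symm⟩
    · exact ⟨hw, hwne, hwn.trans hlam.symm⟩
  · rw [linearIndependent_fin2]
    refine ⟨hwne, ?_⟩
    intro a h
    have h0 : a * (-(m:ℝ) + 1 * Real.sqrt (D:ℝ)) = (m:ℝ) + 1 * Real.sqrt (D:ℝ) := by
      simpa [embQ] using congrFun h 0
    have h1 : a * (-(m:ℝ) - 1 * Real.sqrt (D:ℝ)) = (m:ℝ) - 1 * Real.sqrt (D:ℝ) := by
      simpa [embQ] using congrFun h 1
    have hsum : (a + 1) * (2*(m:ℝ)) = 0 := by linear_combination -h0 - h1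
    have ha : a = -1 := by
      rcases mul_eq_zero.1 hsum with h' | h'
      · linarith
      · linarith
    rw [ha] at h0
    nlinarith [hs_pos]
end
end

section
/- For the imaginary quadratic field ℚ(√−D) with D squarefree positive, the ring of integers contains a principal ideal whose image under the canonical (Minkowski) embedding into ℝ² is a well-rounded lattice if and only if D = 1 or D = 3. -/
noncomputable section

open scoped BigOperators

/-- The canonical-embedding lattice in `ℝ²` of the principal ideal generated by the
element of `O_{ℚ(√−D)}` with coordinates `(x, y)` in the integral basis: for
`D ≡ 3 (mod 4)` the basis is `1, ω = (1+√−D)/2` (lattice spanned by `σ(α), σ(αω)`);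
otherwise it is `1, √−D` (lattice spanned by `σ(α), σ(α√−D)`), where
`σ(a + b√−D) = (a, b√D)`. -/
def imagPrincipalLattice (D : ℕ) (x y : ℤ) : Submodule ℤ (Fin 2 → ℝ) :=
  if D % 4 = 3 then
    Submodule.span ℤ
      ({![(x : ℝ) + y / 2, (y / 2 : ℝ) * Real.sqrt D],
        ![-(y : ℝ) * (D + 1) / 4 + ((x : ℝ) + y) / 2, (((x : ℝ) + y) / 2) * Real.sqrt D]} :
        Set (Fin 2 → ℝ))
  else
    Submodule.span ℤ
      ({![(x : ℝ), (y : ℝ) * Real.sqrt D],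
        ![-(y : ℝ) * D, (x : ℝ) * Real.sqrt D]} : Set (Fin 2 → ℝ))

section Gen

variable (v1 v2 : Fin 2 → ℝ) (N : ℝ) (Q : ℤ → ℤ → ℤ)

lemma sqnorm_zero : sqnorm (0 : Fin 2 → ℝ) = 0 := by simp [sqnorm]

lemma lambda1_eq
    (hN : 0 < N)
    (hsq : ∀ a b : ℤ, sqnorm (a • v1 + b • v2) = N * Q a b)
    (hQ1 : Q 1 0 = 1)
    (hQpos : ∀ a b : ℤ, ¬(a = 0 ∧ b = 0) → 1 ≤ Q a b) :
    lambda1 (Submodule.span ℤ ({v1, v2} : Set (Fin 2 → ℝ))) = N := by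
  have hv1 : sqnorm v1 = N := by simpa [hQ1] using hsq 1 0
  have hv1ne : v1 ≠ 0 := by
    intro h
    rw [h, sqnorm_zero] at hv1
    exact absurd hv1.symm (ne_of_gt hN)
  have hmemS : N ∈ {r : ℝ | ∃ x ∈ Submodule.span ℤ ({v1, v2} : Set (Fin 2 → ℝ)),
      x ≠ 0 ∧ sqnorm x = r} :=
    ⟨v1, Submodule.subset_span (by simp), hv1ne, hv1⟩
  have hlb : ∀ r ∈ {r : ℝ | ∃ x ∈ Submodule.span ℤ ({v1, v2} : Set (Fin 2 → ℝ)),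
      x ≠ 0 ∧ sqnorm x = r}, N ≤ r := by
    rintro r ⟨x, hx, hxne, rfl⟩
    obtain ⟨a, b, hab⟩ := Submodule.mem_span_pair.mp hx
    have habne : ¬(a = 0 ∧ b = 0) := by
      rintro ⟨rfl, rfl⟩
      simp at hab
      exact hxne hab.symm
    have h1 : (1 : ℝ) ≤ (Q a b : ℝ) := by exact_mod_cast hQpos a b habne
    rw [← hab, hsq a b]
    nlinarith
  exact le_antisymm (csInf_le ⟨N, hlb⟩ hmemS) (le_csInf ⟨N, hmemS⟩ hlb)

lemma minvec_rep
    (hN : 0 < N)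
    (hsq : ∀ a b : ℤ, sqnorm (a • v1 + b • v2) = N * Q a b)
    (hQ1 : Q 1 0 = 1)
    (hQpos : ∀ a b : ℤ, ¬(a = 0 ∧ b = 0) → 1 ≤ Q a b)
    {x : Fin 2 → ℝ}
    (hx : IsMinVec (Submodule.span ℤ ({v1, v2} : Set (Fin 2 → ℝ))) x) :
    ∃ a b : ℤ, a • v1 + b • v2 = x ∧ Q a b = 1 := by
  obtain ⟨hmem, hne, hsqn⟩ := hx
  obtain ⟨a, b, hab⟩ := Submodule.mem_span_pair.mp hmem
  rw [lambda1_eq v1 v2 N Q hN hsq hQ1 hQpos] at hsqn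
  have h2 : N * (Q a b : ℝ) = N := by rw [← hsq a b, hab, hsqn]
  have h3 : (Q a b : ℝ) = 1 :=
    mul_left_cancel₀ (ne_of_gt hN) (h2.trans (mul_one N).symm)
  exact ⟨a, b, hab, by exact_mod_cast h3⟩

lemma not_wellRounded
    (hN : 0 < N)
    (hsq : ∀ a b : ℤ, sqnorm (a • v1 + b • v2) = N * Q a b)
    (hQ1 : Q 1 0 = 1)
    (hQpos : ∀ a b : ℤ, ¬(a = 0 ∧ b = 0) → 1 ≤ Q a b)
    (hone : ∀ a b : ℤ, Q a b = 1 → b = 0 ∧ (a = 1 ∨ a = -1)) :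
    ¬ IsWellRounded (Submodule.span ℤ ({v1, v2} : Set (Fin 2 → ℝ))) := by
  rintro ⟨v, hmin, hli⟩
  have hrep : ∀ i, v i = v1 ∨ v i = -v1 := by
    intro i
    obtain ⟨a, b, hab, hQ⟩ := minvec_rep v1 v2 N Q hN hsq hQ1 hQpos (hmin i)
    obtain ⟨rfl, ha⟩ := hone a b hQ
    rcases ha with rfl | rfl
    · left; rw [← hab]; simp
    · right; rw [← hab]; simp
  have key := Fintype.linearIndependent_iff.mp hli
  rcases hrep 0 with h0 | h0 <;> rcases hrep 1 with h1 | h1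
  · have := key ![1, -1] (by simp [Fin.sum_univ_two, h0, h1]) 0
    norm_num at this
  · have := key ![1, 1] (by simp [Fin.sum_univ_two, h0, h1]) 0
    norm_num at this
  · have := key ![1, 1] (by simp [Fin.sum_univ_two, h0, h1]) 0
    norm_num at this
  · have := key ![1, -1] (by simp [Fin.sum_univ_two, h0, h1]) 0
    norm_num at this

lemma li_of_det (u w : Fin 2 → ℝ) (h : u 0 * w 1 - u 1 * w 0 ≠ 0) :
    LinearIndependent ℝ ![u, w] := by
  rw [Fintype.linearIndependent_iff]
  intro g hg
  have h0 : g 0 * u 0 + g 1 * w 0 = 0 := by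
    have := congrFun hg 0
    simpa [Fin.sum_univ_two, smul_eq_mul] using this
  have h1 : g 0 * u 1 + g 1 * w 1 = 0 := by
    have := congrFun hg 1
    simpa [Fin.sum_univ_two, smul_eq_mul] using this
  have hg0 : g 0 = 0 := by
    have : g 0 * (u 0 * w 1 - u 1 * w 0) = 0 := by linear_combination w 1 * h0 - w 0 * h1
    rcases mul_eq_zero.mp this with h' | h'
    · exact h'
    · exact absurd h' h
  have hg1 : g 1 = 0 := by
    have : g 1 * (u 0 * w 1 - u 1 * w 0) = 0 := by linear_combination u 0 * h1 - u 1 * h0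
    rcases mul_eq_zero.mp this with h' | h'
    · exact h'
    · exact absurd h' h
  intro i; fin_cases i <;> assumption

lemma wellRounded
    (hN : 0 < N)
    (hsq : ∀ a b : ℤ, sqnorm (a • v1 + b • v2) = N * Q a b)
    (hQ1 : Q 1 0 = 1)
    (hQ01 : Q 0 1 = 1)
    (hQpos : ∀ a b : ℤ, ¬(a = 0 ∧ b = 0) → 1 ≤ Q a b)
    (hdet : v1 0 * v2 1 - v1 1 * v2 0 ≠ 0) :
    IsWellRounded (Submodule.span ℤ ({v1, v2} : Set (Fin 2 → ℝ))) := by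
  have hl := lambda1_eq v1 v2 N Q hN hsq hQ1 hQpos
  have hv1 : sqnorm v1 = N := by simpa [hQ1] using hsq 1 0
  have hv2 : sqnorm v2 = N := by simpa [hQ01] using hsq 0 1
  have hv1ne : v1 ≠ 0 := by
    intro h; rw [h, sqnorm_zero] at hv1; exact absurd hv1.symm (ne_of_gt hN)
  have hv2ne : v2 ≠ 0 := by
    intro h; rw [h, sqnorm_zero] at hv2; exact absurd hv2.symm (ne_of_gt hN)
  refine ⟨![v1, v2], ?_, li_of_det v1 v2 hdet⟩
  intro i
  fin_cases i
  · exact ⟨Submodule.subset_span (by simp), hv1ne, by rw [hl]; exact hv1⟩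
  · exact ⟨Submodule.subset_span (by simp), hv2ne, by rw [hl]; exact hv2⟩

end Gen

section Inst

lemma one_le_sq_s17 {b : ℤ} (hb : b ≠ 0) : 1 ≤ b ^ 2 := by
  rcases hb.lt_or_gt with h | h <;> nlinarith

/-- quadratic form, non-3 case -/
def Qa (D : ℕ) (a b : ℤ) : ℤ := a ^ 2 + b ^ 2 * D

/-- quadratic form, 3 mod 4 case, `m = (D+1)/4` -/
def Qb (m a b : ℤ) : ℤ := a ^ 2 + a * b + b ^ 2 * m

lemma Qa_pos {D : ℕ} (hD : 1 ≤ D) (a b : ℤ) (hab : ¬(a = 0 ∧ b = 0)) :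
    1 ≤ Qa D a b := by
  have hD' : (1 : ℤ) ≤ (D : ℤ) := by exact_mod_cast hD
  by_cases ha : a = 0
  · have hb : b ≠ 0 := fun hb => hab ⟨ha, hb⟩
    have := one_le_sq_s17 hb
    simp only [Qa, ha]
    nlinarith
  · have := one_le_sq_s17 ha
    simp only [Qa]
    nlinarith [sq_nonneg b, mul_nonneg (sq_nonneg b) (by linarith : (0:ℤ) ≤ (D:ℤ))]

lemma Qa_eq_one {D : ℕ} (hD : 2 ≤ D) (a b : ℤ) (h : Qa D a b = 1) :
    b = 0 ∧ (a = 1 ∨ a = -1) := by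
  have hD' : (2 : ℤ) ≤ (D : ℤ) := by exact_mod_cast hD
  simp only [Qa] at h
  have hb : b = 0 := by
    by_contra hb
    have h1 := one_le_sq_s17 hb
    nlinarith [sq_nonneg a, mul_le_mul h1 hD' (by linarith) (by nlinarith)]
  subst hb
  have ha2 : a ^ 2 = 1 := by linarith [h]
  have : (a - 1) * (a + 1) = 0 := by linear_combination ha2
  rcases mul_eq_zero.mp this with h' | h'
  · exact ⟨rfl, Or.inl (by omega)⟩
  · exact ⟨rfl, Or.inr (by omega)⟩

lemma Qb_pos {m : ℤ} (hm : 1 ≤ m) (a b : ℤ) (hab : ¬(a = 0 ∧ b = 0)) :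
    1 ≤ Qb m a b := by
  by_cases hb : b = 0
  · have ha : a ≠ 0 := fun ha => hab ⟨ha, hb⟩
    have := one_le_sq_s17 ha
    simp only [Qb, hb]
    nlinarith
  · have h1 := one_le_sq_s17 hb
    have hp : 3 ≤ b ^ 2 * (4 * m - 1) := by nlinarith
    simp only [Qb]
    nlinarith [sq_nonneg (2 * a + b)]

lemma Qb_eq_one {m : ℤ} (hm : 2 ≤ m) (a b : ℤ) (h : Qb m a b = 1) :
    b = 0 ∧ (a = 1 ∨ a = -1) := by
  simp only [Qb] at h
  have hb : b = 0 := by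
    by_contra hb
    have h1 := one_le_sq_s17 hb
    have hp : 7 ≤ b ^ 2 * (4 * m - 1) := by nlinarith
    nlinarith [sq_nonneg (2 * a + b)]
  subst hb
  have ha2 : a ^ 2 = 1 := by linarith [h]
  have : (a - 1) * (a + 1) = 0 := by linear_combination ha2
  rcases mul_eq_zero.mp this with h' | h'
  · exact ⟨rfl, Or.inl (by omega)⟩
  · exact ⟨rfl, Or.inr (by omega)⟩

lemma hsq_a (D : ℕ) (x y a b : ℤ) :
    sqnorm (a • ![(x : ℝ), (y : ℝ) * Real.sqrt D] +
        b • ![-(y : ℝ) * D, (x : ℝ) * Real.sqrt D])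
      = ((Qa D x y : ℤ) : ℝ) * ((Qa D a b : ℤ) : ℝ) := by
  have hs : Real.sqrt D ^ 2 = (D : ℝ) := Real.sq_sqrt (by positivity)
  simp only [sqnorm, Fin.sum_univ_two, Pi.add_apply, Pi.smul_apply,
    Matrix.cons_val_zero, Matrix.cons_val_one, Matrix.head_cons, Qa]
  simp only [zsmul_eq_mul]
  push_cast
  linear_combination ((a : ℝ) * y + b * x) ^ 2 * hs

lemma hsq_b (D : ℕ) (m : ℤ) (hm : ((D : ℕ) : ℝ) = 4 * (m : ℝ) - 1) (hm1 : 1 ≤ m)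
    (x y a b : ℤ) :
    sqnorm (a • ![(x : ℝ) + y / 2, (y / 2 : ℝ) * Real.sqrt D] +
        b • ![-(y : ℝ) * (D + 1) / 4 + ((x : ℝ) + y) / 2, (((x : ℝ) + y) / 2) * Real.sqrt D])
      = ((Qb m x y : ℤ) : ℝ) * ((Qb m a b : ℤ) : ℝ) := by
  have hm1' : (1 : ℝ) ≤ (m : ℝ) := by exact_mod_cast hm1
  have hs : Real.sqrt D ^ 2 = (D : ℝ) := Real.sq_sqrt (by rw [hm]; linarith)
  simp only [sqnorm, Fin.sum_univ_two, Pi.add_apply, Pi.smul_apply,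
    Matrix.cons_val_zero, Matrix.cons_val_one, Matrix.head_cons, Qb]
  simp only [zsmul_eq_mul]
  push_cast
  rw [hm] at hs ⊢
  linear_combination ((a : ℝ) * y / 2 + b * ((x : ℝ) + y) / 2) ^ 2 * hs

end Inst


lemma ipl_pos (D : ℕ) (x y : ℤ) (h : D % 4 = 3) :
    imagPrincipalLattice D x y = Submodule.span ℤ
      ({![(x : ℝ) + y / 2, (y / 2 : ℝ) * Real.sqrt D],
        ![-(y : ℝ) * (D + 1) / 4 + ((x : ℝ) + y) / 2, (((x : ℝ) + y) / 2) * Real.sqrt D]} :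
        Set (Fin 2 → ℝ)) := by
  unfold imagPrincipalLattice; rw [if_pos h]

lemma ipl_neg (D : ℕ) (x y : ℤ) (h : D % 4 ≠ 3) :
    imagPrincipalLattice D x y = Submodule.span ℤ
      ({![(x : ℝ), (y : ℝ) * Real.sqrt D],
        ![-(y : ℝ) * D, (x : ℝ) * Real.sqrt D]} : Set (Fin 2 → ℝ)) := by
  unfold imagPrincipalLattice; rw [if_neg h]

/-- the ring of integers of `ℚ(√−D)` (`D` squarefree positive) contains a
principal ideal whose canonical-embedding lattice is well-rounded iff `D = 1` or `D = 3`. -/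
theorem stmt_17 (D : ℕ) (hD : 0 < D) (hsf : Squarefree D) :
    (∃ x y : ℤ, ¬(x = 0 ∧ y = 0) ∧ IsWellRounded (imagPrincipalLattice D x y)) ↔
      D = 1 ∨ D = 3 := by
  constructor
  · rintro ⟨x, y, hxy, hwr⟩
    by_contra hcon
    push_neg at hcon
    obtain ⟨h1, h3⟩ := hcon
    by_cases h4 : D % 4 = 3
    · have hD7 : 7 ≤ D := by omega
      set m : ℤ := ((D : ℤ) + 1) / 4 with hmdef
      have h4' : (D : ℤ) % 4 = 3 := by omega
      have hm4 : 4 * m = (D : ℤ) + 1 := by omega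
      have hm2 : 2 ≤ m := by omega
      have hmr : ((D : ℕ) : ℝ) = 4 * (m : ℝ) - 1 := by
        have h := congrArg (fun z : ℤ => (z : ℝ)) hm4
        push_cast at h
        linarith
      rw [ipl_pos D x y h4] at hwr
      have hN : (0 : ℝ) < ((Qb m x y : ℤ) : ℝ) := by
        have h := Qb_pos (m := m) (by linarith) x y hxy
        exact_mod_cast (by linarith : (0 : ℤ) < Qb m x y)
      exact not_wellRounded _ _ _ (Qb m) hN
        (fun a b => hsq_b D m hmr (by linarith) x y a b)
        (by simp [Qb]) (fun a b => Qb_pos (by linarith) a b)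
        (fun a b => Qb_eq_one hm2 a b) hwr
    · have hD2 : 2 ≤ D := by omega
      rw [ipl_neg D x y h4] at hwr
      have hN : (0 : ℝ) < ((Qa D x y : ℤ) : ℝ) := by
        have h := Qa_pos (D := D) (by omega) x y hxy
        exact_mod_cast (by linarith : (0 : ℤ) < Qa D x y)
      exact not_wellRounded _ _ _ (Qa D) hN
        (fun a b => hsq_a D x y a b)
        (by simp [Qa]) (fun a b => Qa_pos (D := D) (by omega) a b)
        (fun a b => Qa_eq_one hD2 a b) hwr
  · rintro (rfl | rfl)
    · refine ⟨1, 0, by simp, ?_⟩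
      rw [ipl_neg 1 1 0 (by norm_num)]
      refine wellRounded _ _ ((Qa 1 1 0 : ℤ) : ℝ) (Qa 1)
        (by norm_num [Qa]) (fun a b => hsq_a 1 1 0 a b)
        (by norm_num [Qa]) (by norm_num [Qa])
        (fun a b => Qa_pos le_rfl a b) ?_
      simp only [Matrix.cons_val_zero, Matrix.cons_val_one, Matrix.head_cons]
      norm_num [Real.sqrt_one]
    · refine ⟨1, 0, by simp, ?_⟩
      rw [ipl_pos 3 1 0 (by norm_num)]
      have hmr : ((3 : ℕ) : ℝ) = 4 * ((1 : ℤ) : ℝ) - 1 := by norm_num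
      refine wellRounded _ _ ((Qb 1 1 0 : ℤ) : ℝ) (Qb 1)
        (by norm_num [Qb]) (fun a b => hsq_b 3 1 hmr le_rfl 1 0 a b)
        (by norm_num [Qb]) (by norm_num [Qb])
        (fun a b => Qb_pos le_rfl a b) ?_
      have h3 : (0 : ℝ) < Real.sqrt 3 := Real.sqrt_pos.mpr (by norm_num)
      simp only [Matrix.cons_val_zero, Matrix.cons_val_one, Matrix.head_cons]
      push_cast
      norm_num
end
end

section
/- Every nonzero ideal of the ring of integers ℤ[ζₚ] of the p-th cyclotomic field (p an odd prime), embedded via the canonical embedding into ℂ^((p−1)/2) ≅ ℝ^(p−1), yields a well-rounded lattice; in particular, the lattice σ(ℤ[ζₚ]) itself is well-rounded. -/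
noncomputable section

open scoped BigOperators

open NumberField

instance (p : ℕ+) : NumberField (CyclotomicField p ℚ) :=
  haveI : NeZero ((p : ℕ) : ℚ) := ⟨by exact_mod_cast p.ne_zero⟩
  @IsCyclotomicExtension.numberField {(p : ℕ)} ℚ (CyclotomicField p ℚ) _ _ _ _ _
    (CyclotomicField.isCyclotomicExtension _ _)

/-- Squared length of the image of `α` under the canonical embedding of `K` into
`ℂ^{(p−1)/2} ≅ ℝ^{p−1}` (for a totally complex `K`): half the sum over all complex
embeddings of `|σ(α)|²`, i.e. the sum over one embedding from each conjugate pair. -/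
def cycSqnorm (K : Type) [Field K] [NumberField K] (α : K) : ℝ :=
  (1 / 2) * ∑ σ : K →+* ℂ, ‖σ α‖ ^ 2

/-- Minimum distance of the canonical-embedding lattice of the ideal `I`. -/
def cycLambda1 (K : Type) [Field K] [NumberField K] (I : Ideal (𝓞 K)) : ℝ :=
  sInf {r : ℝ | ∃ x ∈ I, x ≠ 0 ∧ cycSqnorm K (algebraMap (𝓞 K) K x) = r}

/-- The canonical-embedding lattice of the ideal `I` is well-rounded in `ℝ^m`:
it contains `m` linearly independent vectors of minimal nonzero length. -/
def cycIsWellRounded (K : Type) [Field K] [NumberField K] (m : ℕ) (I : Ideal (𝓞 K)) : Prop :=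
  ∃ v : Fin m → 𝓞 K,
    (∀ i, v i ∈ I ∧ v i ≠ 0 ∧
      cycSqnorm K (algebraMap (𝓞 K) K (v i)) = cycLambda1 K I) ∧
    LinearIndependent ℚ fun i => algebraMap (𝓞 K) K (v i)

instance (p : ℕ+) : IsCyclotomicExtension {(p : ℕ)} ℚ (CyclotomicField p ℚ) :=
  haveI : NeZero ((p : ℕ) : ℚ) := ⟨by exact_mod_cast p.ne_zero⟩
  CyclotomicField.isCyclotomicExtension _ _

open Polynomial in
lemma sum_abs_sq_int (p : ℕ+) (x : 𝓞 (CyclotomicField p ℚ)) :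
    ∃ n : ℕ, (n : ℝ) = ∑ σ : CyclotomicField p ℚ →+* ℂ,
      ‖σ (algebraMap (𝓞 (CyclotomicField p ℚ)) (CyclotomicField p ℚ) x)‖ ^ 2 := by
  have hζ : IsPrimitiveRoot (IsCyclotomicExtension.zeta p ℚ (CyclotomicField p ℚ)) p :=
    IsCyclotomicExtension.zeta_spec p ℚ _
  set ζ : CyclotomicField p ℚ := IsCyclotomicExtension.zeta p ℚ (CyclotomicField p ℚ) with hζdef
  set pb := hζ.powerBasis ℚ with hpb
  have hgen : pb.gen = ζ := hζ.powerBasis_gen ℚ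
  have hroot : aeval ζ⁻¹ (minpoly ℚ pb.gen) = 0 := by
    rw [hgen, ← Polynomial.cyclotomic_eq_minpoly_rat hζ p.pos, Polynomial.aeval_def,
      Polynomial.eval₂_eq_eval_map, Polynomial.map_cyclotomic]
    exact hζ.inv.isRoot_cyclotomic p.pos
  set c : CyclotomicField p ℚ →ₐ[ℚ] CyclotomicField p ℚ := pb.lift ζ⁻¹ hroot with hc
  have hcζ : c ζ = ζ⁻¹ := by
    have := pb.lift_gen ζ⁻¹ hroot; rwa [hgen] at this
  have habs1 : ∀ φ : CyclotomicField p ℚ →ₐ[ℚ] ℂ, ‖φ ζ‖ = 1 := by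
    intro φ
    have hpow : (φ ζ) ^ (p : ℕ) = 1 := by rw [← map_pow, hζ.pow_eq_one, map_one]
    exact Complex.norm_eq_one_of_pow_eq_one hpow p.pos.ne'
  have hconj : ∀ (φ : CyclotomicField p ℚ →ₐ[ℚ] ℂ) (a : CyclotomicField p ℚ),
      φ (c a) = starRingEnd ℂ (φ a) := by
    intro φ a
    have h : φ.comp c
        = ((starRingEnd ℂ).comp (φ : CyclotomicField p ℚ →+* ℂ)).toRatAlgHom := by
      apply pb.algHom_ext
      rw [hgen]
      show φ (c ζ) = starRingEnd ℂ (φ ζ)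
      rw [hcζ, map_inv₀, Complex.inv_eq_conj (habs1 φ)]
    calc φ (c a) = (φ.comp c) a := rfl
    _ = starRingEnd ℂ (φ a) := by rw [h]; rfl
  set y := algebraMap (𝓞 (CyclotomicField p ℚ)) (CyclotomicField p ℚ) x with hy
  have hyint : IsIntegral ℤ y := RingOfIntegers.isIntegral_coe x
  have hcy : IsIntegral ℤ (c y) := hyint.map (c.restrictScalars ℤ)
  have hint : IsIntegral ℤ (Algebra.trace ℚ (CyclotomicField p ℚ) (y * c y)) :=
    Algebra.isIntegral_trace (hyint.mul hcy)
  obtain ⟨m, hm⟩ := IsIntegrallyClosed.isIntegral_iff.mp hint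
  have hsum : (algebraMap ℚ ℂ (Algebra.trace ℚ (CyclotomicField p ℚ) (y * c y))) =
      ∑ φ : CyclotomicField p ℚ →ₐ[ℚ] ℂ, φ (y * c y) := trace_eq_sum_embeddings ℂ
  have hterm : ∀ φ : CyclotomicField p ℚ →ₐ[ℚ] ℂ,
      φ (y * c y) = ((‖φ y‖ ^ 2 : ℝ) : ℂ) := by
    intro φ
    rw [map_mul, hconj φ y, Complex.mul_conj]
    norm_cast
    rw [Complex.sq_norm]
  have hS : ∑ σ : CyclotomicField p ℚ →+* ℂ, ‖σ y‖ ^ 2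
      = ∑ φ : CyclotomicField p ℚ →ₐ[ℚ] ℂ, ‖φ y‖ ^ 2 :=
    Fintype.sum_equiv (RingHom.equivRatAlgHom _ _) _ _ (fun σ => rfl)
  have key : ((∑ σ : CyclotomicField p ℚ →+* ℂ, ‖σ y‖ ^ 2 : ℝ) : ℂ) = (m : ℂ) := by
    rw [hS, Complex.ofReal_sum]
    calc ∑ φ : CyclotomicField p ℚ →ₐ[ℚ] ℂ, ((‖φ y‖ ^ 2 : ℝ) : ℂ)
        = ∑ φ : CyclotomicField p ℚ →ₐ[ℚ] ℂ, φ (y * c y) := by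
          refine Finset.sum_congr rfl fun φ _ => (hterm φ).symm
    _ = algebraMap ℚ ℂ (Algebra.trace ℚ (CyclotomicField p ℚ) (y * c y)) := hsum.symm
    _ = (m : ℂ) := by rw [← hm]; push_cast; simp
  have hmr : (m : ℝ) = ∑ σ : CyclotomicField p ℚ →+* ℂ, ‖σ y‖ ^ 2 := by
    have := key
    exact_mod_cast this.symm
  have hnn : (0 : ℝ) ≤ (m : ℝ) := by
    rw [hmr]; exact Finset.sum_nonneg fun _ _ => sq_nonneg _
  refine ⟨m.toNat, ?_⟩
  rw [← hmr]
  have : (0 : ℤ) ≤ m := by exact_mod_cast hnn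
  have h2 : ((m.toNat : ℤ) : ℝ) = (m : ℝ) := by rw [Int.toNat_of_nonneg this]
  exact_mod_cast h2

/-- for an odd prime `p`, every nonzero ideal of `ℤ[ζₚ]` yields a
well-rounded lattice in `ℝ^{p−1}` under the canonical embedding; in particular the
lattice of `ℤ[ζₚ]` itself is well-rounded. -/
theorem stmt_18 (p : ℕ+) (hp : (p : ℕ).Prime) (hodd : Odd (p : ℕ)) :
    (∀ I : Ideal (𝓞 (CyclotomicField p ℚ)), I ≠ ⊥ →
      cycIsWellRounded (CyclotomicField p ℚ) ((p : ℕ) - 1) I) ∧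
    cycIsWellRounded (CyclotomicField p ℚ) ((p : ℕ) - 1)
      (⊤ : Ideal (𝓞 (CyclotomicField p ℚ))) := by
  have hmain : ∀ I : Ideal (𝓞 (CyclotomicField p ℚ)), I ≠ ⊥ →
      cycIsWellRounded (CyclotomicField p ℚ) ((p : ℕ) - 1) I := by
    intro I hI
    -- primitive root setup
    have hζ : IsPrimitiveRoot (IsCyclotomicExtension.zeta p ℚ (CyclotomicField p ℚ)) p :=
      IsCyclotomicExtension.zeta_spec p ℚ _
    set ζ : CyclotomicField p ℚ := IsCyclotomicExtension.zeta p ℚ (CyclotomicField p ℚ) with hζdef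
    have hζint : IsIntegral ℤ ζ := hζ.isIntegral p.pos
    set ζ₀ : 𝓞 (CyclotomicField p ℚ) := ⟨ζ, hζint⟩ with hζ₀def
    have hζ₀coe : algebraMap (𝓞 (CyclotomicField p ℚ)) (CyclotomicField p ℚ) ζ₀ = ζ := rfl
    have hζne : ζ ≠ 0 := hζ.ne_zero p.pos.ne'
    have hζ₀ne : ζ₀ ≠ 0 := by
      intro h
      apply hζne
      rw [← hζ₀coe, h, map_zero]
    -- all embeddings send ζ to a unit-modulus number
    have habs1 : ∀ σ : CyclotomicField p ℚ →+* ℂ, ‖σ ζ‖ = 1 := by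
      intro σ
      have hpow : (σ ζ) ^ (p : ℕ) = 1 := by rw [← map_pow, hζ.pow_eq_one, map_one]
      exact Complex.norm_eq_one_of_pow_eq_one hpow p.pos.ne'
    -- invariance of the squared norm under multiplication by powers of ζ
    have hinv : ∀ (k : ℕ) (a : CyclotomicField p ℚ),
        cycSqnorm (CyclotomicField p ℚ) (ζ ^ k * a) = cycSqnorm (CyclotomicField p ℚ) a := by
      intro k a
      unfold cycSqnorm
      congr 1
      refine Finset.sum_congr rfl fun σ _ => ?_
      rw [map_mul, norm_mul, map_pow, norm_pow, habs1, one_pow, one_mul]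
    -- minimum attained
    obtain ⟨z, hzI, hz0⟩ := Submodule.exists_mem_ne_zero_of_ne_bot hI
    set A : Set ℕ := {n : ℕ | ∃ x, x ∈ I ∧ x ≠ 0 ∧ (n : ℝ) = ∑ σ : CyclotomicField p ℚ →+* ℂ,
      ‖σ (algebraMap (𝓞 (CyclotomicField p ℚ)) (CyclotomicField p ℚ) x)‖ ^ 2} with hA
    have hAne : A.Nonempty := by
      obtain ⟨n, hn⟩ := sum_abs_sq_int p z
      exact ⟨n, z, hzI, hz0, hn⟩
    obtain ⟨x₀, hx₀I, hx₀0, hx₀n⟩ : sInf A ∈ A := Nat.sInf_mem hAne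
    have hmin : ∀ x : 𝓞 (CyclotomicField p ℚ), x ∈ I → x ≠ 0 →
        ((sInf A : ℕ) : ℝ) ≤ ∑ σ : CyclotomicField p ℚ →+* ℂ,
          ‖σ (algebraMap (𝓞 (CyclotomicField p ℚ)) (CyclotomicField p ℚ) x)‖ ^ 2 := by
      intro x hxI hx0
      obtain ⟨n, hn⟩ := sum_abs_sq_int p x
      rw [← hn]
      have hnA : n ∈ A := ⟨x, hxI, hx0, hn⟩
      exact_mod_cast Nat.sInf_le hnA
    have hsqx₀ : cycSqnorm (CyclotomicField p ℚ)
        (algebraMap (𝓞 (CyclotomicField p ℚ)) (CyclotomicField p ℚ) x₀)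
        = (1 / 2) * ((sInf A : ℕ) : ℝ) := by
      unfold cycSqnorm; rw [← hx₀n]
    have hlam : cycLambda1 (CyclotomicField p ℚ) I = (1 / 2) * ((sInf A : ℕ) : ℝ) := by
      unfold cycLambda1
      have hmem : ((1 : ℝ) / 2) * ((sInf A : ℕ) : ℝ) ∈
          {r : ℝ | ∃ x ∈ I, x ≠ 0 ∧ cycSqnorm (CyclotomicField p ℚ)
            (algebraMap (𝓞 (CyclotomicField p ℚ)) (CyclotomicField p ℚ) x) = r} :=
        ⟨x₀, hx₀I, hx₀0, hsqx₀⟩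
      have hlb : ∀ r ∈ {r : ℝ | ∃ x ∈ I, x ≠ 0 ∧ cycSqnorm (CyclotomicField p ℚ)
            (algebraMap (𝓞 (CyclotomicField p ℚ)) (CyclotomicField p ℚ) x) = r},
          (1 / 2) * ((sInf A : ℕ) : ℝ) ≤ r := by
        rintro r ⟨x, hxI, hx0, rfl⟩
        unfold cycSqnorm
        have := hmin x hxI hx0
        linarith
      exact le_antisymm (csInf_le ⟨_, hlb⟩ hmem) (le_csInf ⟨_, hmem⟩ hlb)
    -- the family of minimal vectors
    refine ⟨fun i => ζ₀ ^ (i : ℕ) * x₀, fun i => ⟨I.mul_mem_left _ hx₀I,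
      mul_ne_zero (pow_ne_zero _ hζ₀ne) hx₀0, ?_⟩, ?_⟩
    · rw [map_mul, map_pow, hζ₀coe, hinv, hsqx₀, hlam]
    · -- linear independence
      set pb := hζ.powerBasis ℚ with hpb
      have hgen : pb.gen = ζ := hζ.powerBasis_gen ℚ
      have hdim : pb.dim = (p : ℕ) - 1 := by
        rw [← pb.finrank, IsCyclotomicExtension.finrank (CyclotomicField p ℚ)
          (Polynomial.cyclotomic.irreducible_rat p.pos), Nat.totient_prime hp]
      have h1 : LinearIndependent ℚ (fun i : Fin pb.dim => pb.gen ^ (i : ℕ)) := by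
        have := pb.basis.linearIndependent
        rwa [pb.coe_basis] at this
      have h2 : LinearIndependent ℚ (fun i : Fin ((p : ℕ) - 1) => ζ ^ (i : ℕ)) := by
        have := h1.comp (finCongr hdim.symm) (finCongr hdim.symm).injective
        simpa [hgen, Function.comp_def] using this
      have hx₀c : algebraMap (𝓞 (CyclotomicField p ℚ)) (CyclotomicField p ℚ) x₀ ≠ 0 := by
        rwa [ne_eq, RingOfIntegers.coe_eq_zero_iff]
      have h3 := h2.map' (LinearMap.mulLeft ℚ
          (algebraMap (𝓞 (CyclotomicField p ℚ)) (CyclotomicField p ℚ) x₀))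
        (LinearMap.ker_eq_bot.mpr (mul_right_injective₀ hx₀c))
      convert h3 using 1
      funext i
      simp [map_mul, map_pow, hζ₀coe, mul_comm]
      all_goals rfl
  refine ⟨hmain, hmain ⊤ ?_⟩
  intro h
  exact one_ne_zero ((Submodule.mem_bot _).mp (h ▸ Submodule.mem_top))
end
end
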